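/- arXiv:2209.13571 — 3 statements merged into one kernel-verified Lean document; each statement's English description precedes it below -/
import Mathlib

section
/- For every a ≥ 0 and all ψ₁, ψ₂ ∈ V_a: β_a(ψ₁,ψ₂) = sup_{x ∈ 𝕋} max{ ψ₂(x)/ψ₁(x), (a·ψ₂(x) − ψ₂'(x))/(a·ψ₁(x) − ψ₁'(x)), (a·ψ₂(x) + ψ₂'(x))/(a·ψ₁(x) + ψ₁'(x)) }. -/
open MeasureTheory Filter Topology Set

noncomputable section

instance fact_zero_lt_one_real : Fact ((0:ℝ) < 1) := ⟨one_pos⟩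

/-- The circle `𝕋 = ℝ/ℤ`. -/
abbrev 𝕋 : Type := AddCircle (1 : ℝ)

/-- Canonical representative of a point of the circle, in `[0,1)`. -/
def rep (t : 𝕋) : ℝ := ((AddCircle.equivIco 1 0 t : Set.Ico (0:ℝ) (0 + 1)) : ℝ)

/-- The lift of a function on the circle to a `1`-periodic function on `ℝ`. -/
def lift1 (ψ : 𝕋 → ℝ) : ℝ → ℝ := fun x => ψ (x : 𝕋)

/-- The cone `V_a` of positive `C²` functions on `𝕋` with `|ψ'| < a·ψ`. -/
def Vcone (a : ℝ) : Set (𝕋 → ℝ) :=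
  {ψ | ContDiff ℝ 2 (lift1 ψ) ∧ (∀ x : 𝕋, 0 < ψ x) ∧
    ∀ x : ℝ, |deriv (lift1 ψ) x| < a * lift1 ψ x}

/-- `β_a(ψ₁,ψ₂) = inf {t > 0 : t·ψ₁ - ψ₂ ∈ V_a}`. -/
def betaH (a : ℝ) (ψ₁ ψ₂ : 𝕋 → ℝ) : ℝ :=
  sInf {t : ℝ | 0 < t ∧ (fun x => t * ψ₁ x - ψ₂ x) ∈ Vcone a}

/-- The Hilbert projective (pseudo)metric of the cone `V_a`. -/
def thetaH (a : ℝ) (ψ₁ ψ₂ : 𝕋 → ℝ) : ℝ :=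
  Real.log (betaH a ψ₁ ψ₂) + Real.log (betaH a ψ₂ ψ₁)

/-- θ_{b}-diameter of `V_c` inside `V_b`. -/
def coneDiam (b c : ℝ) : ℝ :=
  sSup {d : ℝ | ∃ ψ₁ ∈ Vcone c, ∃ ψ₂ ∈ Vcone c, d = thetaH b ψ₁ ψ₂}

section Multi

variable {ι : Type} [Fintype ι] [DecidableEq ι]

/-- Lift of a function on `𝕋^ι` to a function on `ℝ^ι`, periodic in each coordinate. -/
def liftN (ρ : (ι → 𝕋) → ℝ) : (ι → ℝ) → ℝ := fun x => ρ (fun i => (x i : 𝕋))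

/-- Partial derivative in the `i`-th coordinate direction. -/
def pd (i : ι) (f : (ι → ℝ) → ℝ) : (ι → ℝ) → ℝ :=
  fun x => fderiv ℝ f x (Pi.single i 1)

/-- Conditional density of the density `ρ` along the `i`-th coordinate, over the
configuration `x` of the remaining coordinates. -/
def condDens (ρ : (ι → 𝕋) → ℝ) (i : ι) (x : ι → 𝕋) : 𝕋 → ℝ :=
  fun t => ρ (Function.update x i t) / ∫ s : 𝕋, ρ (Function.update x i s)

/-- Membership in `M^{(i,k)}_{a,b,L}`, expressed on densities. -/
def MemMik (a b L : ℝ) (i k : ι) (ρ : (ι → 𝕋) → ℝ) : Prop :=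
  (∀ x : ι → 𝕋, condDens ρ i x ∈ Vcone a) ∧
  ∀ (x : ι → 𝕋) (t : 𝕋),
    thetaH b (condDens ρ i x) (condDens ρ i (Function.update x k t)) ≤ L * dist (x k) t

/-- Membership in `M^{(i)}_{a,b,L}`. -/
def MemMi (a b L : ℝ) (i : ι) (ρ : (ι → 𝕋) → ℝ) : Prop :=
  ∀ k, k ≠ i → MemMik a b L i k ρ

/-- Membership in `M_{a,b,L}`. -/
def MemM (a b L : ℝ) (ρ : (ι → 𝕋) → ℝ) : Prop :=
  ∀ i, MemMi a b L i ρ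

/-- `ρ` is a positive `C²` function on the torus. -/
def IsC2Density (ρ : (ι → 𝕋) → ℝ) : Prop :=
  ContDiff ℝ 2 (liftN ρ) ∧ ∀ x, 0 < ρ x

/-- The bound `|∂_i∂_j ρ / ρ| ≤ α` defining the class `C²_α`. -/
def MemC2 (α : ℝ) (ρ : (ι → 𝕋) → ℝ) : Prop :=
  ∀ (i j : ι) (x : ι → ℝ), |pd i (pd j (liftN ρ)) x| ≤ α * liftN ρ x

/-- `μ` is absolutely continuous with density `ρ`. -/
def HasDensity (μ : Measure (ι → 𝕋)) (ρ : (ι → 𝕋) → ℝ) : Prop :=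
  μ = volume.withDensity (fun x => ENNReal.ofReal (ρ x))

/-- The measure class `M_{a,b,L}` (with positive `C²` density). -/
def InMMeas (a b L : ℝ) (μ : Measure (ι → 𝕋)) : Prop :=
  ∃ ρ, HasDensity μ ρ ∧ IsC2Density ρ ∧ MemM a b L ρ

/-- The measure class `M^{(i)}_{a,b,L}` (with positive `C²` density). -/
def InMiMeas (a b L : ℝ) (i : ι) (μ : Measure (ι → 𝕋)) : Prop :=
  ∃ ρ, HasDensity μ ρ ∧ IsC2Density ρ ∧ MemMi a b L i ρ

/-- The measure class `M_{a,b,L} ∩ C²_α`. -/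
def InMC2 (a b L α : ℝ) (μ : Measure (ι → 𝕋)) : Prop :=
  ∃ ρ, HasDensity μ ρ ∧ IsC2Density ρ ∧ MemM a b L ρ ∧ MemC2 α ρ

/-- Marginal `Π_i μ` on the `i`-th coordinate. -/
def margin (i : ι) (μ : Measure (ι → 𝕋)) : Measure 𝕋 :=
  Measure.map (fun x => x i) μ

/-- Marginal `Π̂_i μ` on the coordinates different from `i`. -/
def marginHat (i : ι) (μ : Measure (ι → 𝕋)) : Measure ({j : ι // j ≠ i} → 𝕋) :=
  Measure.map (fun x (j : {j : ι // j ≠ i}) => x (j : ι)) μ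

/-- Density of the marginal on the `i`-th coordinate. -/
def margDens (ρ : (ι → 𝕋) → ℝ) (i : ι) : 𝕋 → ℝ :=
  fun t => ∫ y : ι → 𝕋, ρ (Function.update y i t)

/-- Oscillation in each coordinate bounded by `α` (the class `O_α`). -/
def OscBdd (α : ℝ) (g : (ι → 𝕋) → ℝ) : Prop :=
  Integrable g volume ∧
    ∀ (j : ι) (x : ι → 𝕋) (t : 𝕋), |g x - g (Function.update x j t)| ≤ α

/-- `ψ` depends only on coordinates outside `s`. -/
def DependsOutside (s : Finset ι) (ψ : (ι → 𝕋) → ℝ) : Prop :=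
  ∀ x y : ι → 𝕋, (∀ j, j ∉ s → x j = y j) → ψ x = ψ y

/-- Replace the coordinates in `s` of `y` by those of `x`. -/
def patch (s : Finset ι) (x y : ι → 𝕋) : ι → 𝕋 :=
  fun j => if j ∈ s then x j else y j

/-- The average of `g` with respect to the conditional measure of the measure with density
`ρ`, given the coordinates in `s` (equal to those of `x`). -/
def condAvg (ρ : (ι → 𝕋) → ℝ) (s : Finset ι) (g : (ι → 𝕋) → ℝ) (x : ι → 𝕋) : ℝ :=
  (∫ y : ι → 𝕋, g (patch s x y) * ρ (patch s x y)) / ∫ y : ι → 𝕋, ρ (patch s x y)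

/-- The fiber (leaf) over `x` of the foliation along the `i`-th coordinate. -/
def fiber (i : ι) (x : ι → 𝕋) : Set (ι → 𝕋) :=
  {z | ∀ j, j ≠ i → z j = x j}

/-- The loop `t ↦ (t; x̂_i)` through the `i`-th coordinate. -/
def coordLoop (i : ι) (y : ι → 𝕋) : C(𝕋, ι → 𝕋) :=
  ⟨fun t => Function.update y i t, by
    apply continuous_pi
    intro j
    simp only [Function.update_apply]
    split_ifs with h
    · subst h; exact continuous_id
    · exact continuous_const⟩

end Multi

/-- Total variation distance between two (finite) measures. -/
def tvDist {X : Type*} [MeasurableSpace X] (μ ν : Measure X) : ℝ :=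
  ⨆ s : {s : Set X // MeasurableSet s}, |(μ (s : Set X)).toReal - (ν (s : Set X)).toReal|

/-! ### Globally coupled maps -/

/-- The data (lifts of the uncoupled maps and of the interactions) of a system of `N`
globally coupled maps. -/
structure CoupledData (N : ℕ) where
  f : Fin N → ℝ → ℝ
  h : Fin N → Fin N → ℝ → ℝ → ℝ

/-- The lift of the coupled map: `F_i(x) = f_i(x_i) + N⁻¹ Σ_j h_{ij}(x_i,x_j)`. -/
def CoupledData.liftMap {N : ℕ} (D : CoupledData N) (x : Fin N → ℝ) (i : Fin N) : ℝ :=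
  D.f i (x i) + (1 / (N : ℝ)) * ∑ j, D.h i j (x i) (x j)

/-- `F : 𝕋^N → 𝕋^N` is the coupled map determined by the data `D`. -/
def CoupledData.IsLiftOf {N : ℕ} (D : CoupledData N) (F : (Fin N → 𝕋) → Fin N → 𝕋) : Prop :=
  ∀ x : Fin N → ℝ, F (fun i => (x i : 𝕋)) = fun i => ((D.liftMap x i : ℝ) : 𝕋)

/-- Assumption (F) with datum `(κ, K, E)`. -/
def AssumptionF {N : ℕ} (κ K E : ℝ) (D : CoupledData N) : Prop :=
  1 < κ - E ∧
  (∀ i, ContDiff ℝ 3 (D.f i)) ∧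
  (∀ i j, ContDiff ℝ 3 (fun p : ℝ × ℝ => D.h i j p.1 p.2)) ∧
  (∀ i (x : ℝ), ((D.f i (x + 1) : ℝ) : 𝕋) = ((D.f i x : ℝ) : 𝕋)) ∧
  (∀ i j (x y : ℝ), D.h i j (x + 1) y = D.h i j x y ∧ D.h i j x (y + 1) = D.h i j x y) ∧
  (∀ i j (n : ℕ), n ≤ 3 → ∀ p : ℝ × ℝ,
      ‖iteratedFDeriv ℝ n (fun q : ℝ × ℝ => D.h i j q.1 q.2) p‖ ≤ E) ∧
  (∀ i (x : ℝ), |iteratedDeriv 2 (D.f i) x| ≤ K) ∧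
  (∀ i (x : ℝ), |iteratedDeriv 3 (D.f i) x| ≤ K) ∧
  (∀ i (x : ℝ), κ < |deriv (D.f i) x|)

/-- Lift of the mean-field map `F_{μ,i}`. -/
def meanFieldLift {N : ℕ} (D : CoupledData N) (μ : Measure (Fin N → 𝕋)) (i : Fin N)
    (x : ℝ) : ℝ :=
  D.f i x + (1 / (N : ℝ)) *
    ∫ y : Fin N → 𝕋, (∑ j, D.h i j x (if j = i then x else rep (y j))) ∂μ

/-- The mean-field (product) map `F_μ`. -/
def meanFieldMap {N : ℕ} (D : CoupledData N) (μ : Measure (Fin N → 𝕋)) :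
    (Fin N → 𝕋) → Fin N → 𝕋 :=
  fun x i => ((meanFieldLift D μ i (rep (x i)) : ℝ) : 𝕋)

/-- The self-consistent transfer operator `𝓕 μ = (F_μ)_* μ`. -/
def STO {N : ℕ} (D : CoupledData N) (μ : Measure (Fin N → 𝕋)) : Measure (Fin N → 𝕋) :=
  Measure.map (meanFieldMap D μ) μ

/-! ### Maps satisfying Assumptions (H1), (H2) -/

/-- `HL` is a lift of the torus map `H`. -/
def IsLiftMap {N : ℕ} (HL : (Fin N → ℝ) → Fin N → ℝ) (H : (Fin N → 𝕋) → Fin N → 𝕋) : Prop :=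
  ∀ x : Fin N → ℝ, H (fun i => (x i : 𝕋)) = fun i => ((HL x i : ℝ) : 𝕋)

/-- Assumption (H1) with datum `(κ, E)`. -/
def AssumptionH1 {N : ℕ} (κ E : ℝ) (HL : (Fin N → ℝ) → Fin N → ℝ) : Prop :=
  1 < κ - E ∧ ContDiff ℝ 1 HL ∧
  (∀ (i : Fin N) (x : Fin N → ℝ), κ < |pd i (fun y => HL y i) x|) ∧
  (∀ (i j : Fin N), j ≠ i → ∀ x, |pd j (fun y => HL y i) x| < E / (N : ℝ))

/-- Assumption (H2) with datum `(K, E)`. -/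
def AssumptionH2 {N : ℕ} (K E : ℝ) (HL : (Fin N → ℝ) → Fin N → ℝ) : Prop :=
  ContDiff ℝ 3 HL ∧
  (∀ (i : Fin N) (x : Fin N → ℝ), |pd i (pd i (fun y => HL y i)) x| ≤ K) ∧
  (∀ (i j k : Fin N), j ≠ i → ∀ x, |pd k (pd j (fun y => HL y i)) x| ≤ E / (N : ℝ)) ∧
  (∀ (i j k : Fin N), j ≠ i → k ≠ i → k ≠ j →
    ∀ x, |pd k (pd j (fun y => HL y i)) x| ≤ E / ((N : ℝ) ^ 2)) ∧
  (∀ (j l : Fin N), l ≠ j → ∀ x, |pd l (pd j (pd j (fun y => HL y j))) x| ≤ E / (N : ℝ)) ∧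
  (∀ (j k l : Fin N), l ≠ j → k ≠ j → l ≠ k →
    ∀ x, |pd l (pd k (pd j (fun y => HL y j))) x| ≤ E / ((N : ℝ) ^ 2))

/-- The straightening diffeomorphism `Φ_i` associated with `H` (with lift `ΦL`). -/
def IsStraightening {N : ℕ} (i : Fin N) (H Φ : (Fin N → 𝕋) → Fin N → 𝕋)
    (ΦL : (Fin N → ℝ) → Fin N → ℝ) : Prop :=
  Function.Bijective Φ ∧ Continuous Φ ∧ ContDiff ℝ 1 ΦL ∧ IsLiftMap ΦL Φ ∧
  (∀ x : Fin N → 𝕋, Φ x i = x i) ∧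
  (∀ x : Fin N → ℝ, ΦL x i = x i) ∧
  (∀ x : Fin N → 𝕋, ∀ j, j ≠ i → H (Φ x) j = H (Function.update x i (0 : 𝕋)) j) ∧
  (∀ x : Fin N → 𝕋, Φ (Function.update x i (0 : 𝕋)) = Function.update x i (0 : 𝕋))

/-- The Jacobian matrix of a lift `HL` at `x`. -/
def Jmat {N : ℕ} (HL : (Fin N → ℝ) → Fin N → ℝ) (x : Fin N → ℝ) :
    Matrix (Fin N) (Fin N) ℝ :=
  fun i j => pd j (fun y => HL y i) x

/-- The absolute value of the Jacobian determinant of a lift `ΦL`, as a function on `𝕋^N`. -/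
def jacDet {N : ℕ} (ΦL : (Fin N → ℝ) → Fin N → ℝ) : (Fin N → 𝕋) → ℝ :=
  fun x => |(fderiv ℝ ΦL (fun j => rep (x j))).det|

end


/-- Explicit formula for `β_a` on the cone `V_a`. -/
theorem betaH_formula (a : ℝ) (ha : 0 ≤ a) (ψ₁ ψ₂ : 𝕋 → ℝ)
    (h₁ : ψ₁ ∈ Vcone a) (h₂ : ψ₂ ∈ Vcone a) :
    betaH a ψ₁ ψ₂ =
      ⨆ x : ℝ,
        max (lift1 ψ₂ x / lift1 ψ₁ x)
          (max
            ((a * lift1 ψ₂ x - deriv (lift1 ψ₂) x) / (a * lift1 ψ₁ x - deriv (lift1 ψ₁) x))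
            ((a * lift1 ψ₂ x + deriv (lift1 ψ₂) x) / (a * lift1 ψ₁ x + deriv (lift1 ψ₁) x))) := by
  obtain ⟨hc₁, hp₁, hd₁⟩ := h₁
  obtain ⟨hc₂, hp₂, hd₂⟩ := h₂
  set f := lift1 ψ₁ with hf
  set g := lift1 ψ₂ with hg
  have hfpos : ∀ x : ℝ, 0 < f x := fun x => hp₁ _
  have hgpos : ∀ x : ℝ, 0 < g x := fun x => hp₂ _
  have hA : ∀ x, 0 < a * f x - deriv f x := fun x => by
    have h := (abs_lt.1 (hd₁ x)).2; linarith
  have hB : ∀ x, 0 < a * f x + deriv f x := fun x => by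
    have h := (abs_lt.1 (hd₁ x)).1; linarith
  set G : ℝ → ℝ := fun x => max (g x / f x)
      (max ((a * g x - deriv g x) / (a * f x - deriv f x))
        ((a * g x + deriv g x) / (a * f x + deriv f x))) with hG
  -- continuity
  have hcf : Continuous f := hc₁.continuous
  have hcg : Continuous g := hc₂.continuous
  have hcf' : Continuous (deriv f) := hc₁.continuous_deriv one_le_two
  have hcg' : Continuous (deriv g) := hc₂.continuous_deriv one_le_two
  have hGcont : Continuous G := by
    apply Continuous.max
    · exact hcg.div hcf fun x => (hfpos x).ne'
    apply Continuous.max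
    · exact ((continuous_const.mul hcg).sub hcg').div
        ((continuous_const.mul hcf).sub hcf') fun x => (hA x).ne'
    · exact ((continuous_const.mul hcg).add hcg').div
        ((continuous_const.mul hcf).add hcf') fun x => (hB x).ne'
  -- periodicity
  have hperf : Function.Periodic f 1 := fun x => congrArg ψ₁ (AddCircle.coe_add_period 1 x)
  have hperg : Function.Periodic g 1 := fun x => congrArg ψ₂ (AddCircle.coe_add_period 1 x)
  have hperd : ∀ (u : ℝ → ℝ), Function.Periodic u 1 → Function.Periodic (deriv u) 1 := by
    intro u hu x
    have h1 : (fun y => u (y + 1)) = u := funext fun y => hu y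
    calc deriv u (x + 1) = deriv (fun y => u (y + 1)) x := (deriv_comp_add_const u 1 x).symm
      _ = deriv u x := by rw [h1]
  have hGper : Function.Periodic G 1 := fun x => by
    simp only [hG, hperf x, hperg x, hperd f hperf x, hperd g hperg x]
  -- the maximum of G
  obtain ⟨x₀, _, hx₀⟩ := isCompact_Icc.exists_isMaxOn (Set.nonempty_Icc.2 zero_le_one)
    (hGcont.continuousOn (s := Set.Icc (0:ℝ) 1))
  set M := G x₀ with hM
  have hub : ∀ x : ℝ, G x ≤ M := by
    intro x
    have hfr : G (Int.fract x) = G x := by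
      have h := hGper.sub_int_mul_eq (x := x) ⌊x⌋
      rw [mul_one] at h
      exact h
    have hmem : Int.fract x ∈ Set.Icc (0:ℝ) 1 :=
      ⟨Int.fract_nonneg x, (Int.fract_lt_one x).le⟩
    calc G x = G (Int.fract x) := hfr.symm
      _ ≤ M := hx₀ hmem
  have hMpos : 0 < M :=
    lt_of_lt_of_le (lt_of_lt_of_le (div_pos (hgpos 0) (hfpos 0)) (le_max_left _ _)) (hub 0)
  -- derivatives
  have hdf : ∀ x, HasDerivAt f (deriv f x) x := fun x =>
    ((hc₁.differentiable two_ne_zero) x).hasDerivAt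
  have hdg : ∀ x, HasDerivAt g (deriv g x) x := fun x =>
    ((hc₂.differentiable two_ne_zero) x).hasDerivAt
  -- characterization of the admissible set
  have key : ∀ t : ℝ, (0 < t ∧ (fun x => t * ψ₁ x - ψ₂ x) ∈ Vcone a) ↔ M < t := by
    intro t
    constructor
    · rintro ⟨htpos, _, hpp, hdd⟩
      have hlt : ∀ x : ℝ, G x < t := by
        intro x
        have hder : deriv (lift1 (fun y => t * ψ₁ y - ψ₂ y)) x
            = t * deriv f x - deriv g x :=
          (((hdf x).const_mul t).sub (hdg x)).deriv
        have hpos' : 0 < t * f x - g x := hpp ((x : ℝ) : 𝕋)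
        have habs := hdd x
        rw [hder] at habs
        have habs' : |t * deriv f x - deriv g x| < a * (t * f x - g x) := habs
        obtain ⟨hl, hr⟩ := abs_lt.1 habs'
        have h1 : g x / f x < t := (div_lt_iff₀ (hfpos x)).2 (by linarith)
        have h2 : (a * g x - deriv g x) / (a * f x - deriv f x) < t :=
          (div_lt_iff₀ (hA x)).2 (by nlinarith)
        have h3 : (a * g x + deriv g x) / (a * f x + deriv f x) < t :=
          (div_lt_iff₀ (hB x)).2 (by nlinarith)
        exact max_lt h1 (max_lt h2 h3)
      exact hlt x₀
    · intro ht
      have htpos : 0 < t := hMpos.trans ht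
      have hlt : ∀ x : ℝ, G x < t := fun x => lt_of_le_of_lt (hub x) ht
      have h1 : ∀ x : ℝ, g x < t * f x := fun x =>
        (div_lt_iff₀ (hfpos x)).1 (lt_of_le_of_lt (le_max_left _ _) (hlt x))
      have h2 : ∀ x : ℝ, a * g x - deriv g x < t * (a * f x - deriv f x) := fun x =>
        (div_lt_iff₀ (hA x)).1
          (lt_of_le_of_lt ((le_max_left _ _).trans (le_max_right _ _)) (hlt x))
      have h3 : ∀ x : ℝ, a * g x + deriv g x < t * (a * f x + deriv f x) := fun x =>
        (div_lt_iff₀ (hB x)).1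
          (lt_of_le_of_lt ((le_max_right _ _).trans (le_max_right _ _)) (hlt x))
      refine ⟨htpos, ?_, ?_, ?_⟩
      · exact (contDiff_const.mul hc₁).sub hc₂
      · intro x
        induction x using QuotientAddGroup.induction_on with
        | H r => exact sub_pos.2 (h1 r)
      · intro x
        have hder : deriv (lift1 (fun y => t * ψ₁ y - ψ₂ y)) x
            = t * deriv f x - deriv g x :=
          (((hdf x).const_mul t).sub (hdg x)).deriv
        rw [hder]
        have hval : lift1 (fun y => t * ψ₁ y - ψ₂ y) x = t * f x - g x := rfl
        rw [hval, abs_lt]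
        constructor
        · nlinarith [h3 x]
        · nlinarith [h2 x]
  have hSet : {t : ℝ | 0 < t ∧ (fun x => t * ψ₁ x - ψ₂ x) ∈ Vcone a} = Set.Ioi M :=
    Set.ext fun t => (key t).trans (by simp)
  have hbeta : betaH a ψ₁ ψ₂ = M := by
    rw [betaH, hSet, csInf_Ioi]
  rw [hbeta]
  have hbdd : BddAbove (Set.range G) := ⟨M, fun y ⟨x, hx⟩ => hx ▸ hub x⟩
  exact le_antisymm (hM ▸ le_ciSup hbdd x₀) (ciSup_le hub)
end

section
/- Let a ≥ 0, ρ_1,…,ρ_n ∈ V_a, and β_1,…,β_n > 0, β_1',…,β_n' > 0. Set D := 2·min_{1≤j≤n} max_{1≤i≤n} θ_a(ρ_j, ρ_i). Then θ_a(Σ_{i=1}^n β_i ρ_i, Σ_{i=1}^n β_i' ρ_i) ≤ (1 − e^{−D}) · log( max_{i,j} (β_i/β_i')·(β_j'/β_j) ). -/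
open MeasureTheory Filter Topology Set

namespace ConeAux

/-- The weak cone. -/
def W (a : ℝ) : Set (𝕋 → ℝ) :=
  {ψ | ContDiff ℝ 2 (lift1 ψ) ∧ (∀ x : 𝕋, 0 ≤ ψ x) ∧
    ∀ x : ℝ, |deriv (lift1 ψ)  x| ≤ a * lift1 ψ x}

lemma V_subset_W {a : ℝ} {ψ : 𝕋 → ℝ} (h : ψ ∈ Vcone a) : ψ ∈ W a :=
  ⟨h.1, fun x => (h.2.1 x).le, fun x => (h.2.2 x).le⟩

lemma W_zero {a : ℝ} : (fun _ : 𝕋 => (0:ℝ)) ∈ W a := by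
  refine ⟨contDiff_const, fun x => le_rfl, fun x => ?_⟩
  have : lift1 (fun _ : 𝕋 => (0:ℝ)) = fun _ : ℝ => (0:ℝ) := rfl
  rw [this, deriv_const']
  simp

lemma lift1_add (f g : 𝕋 → ℝ) :
    lift1 (fun x => f x + g x) = fun y => lift1 f y + lift1 g y := rfl

lemma lift1_smul (c : ℝ) (f : 𝕋 → ℝ) :
    lift1 (fun x => c * f x) = fun y => c * lift1 f y := rfl

lemma W_add {a : ℝ} {f g : 𝕋 → ℝ} (hf : f ∈ W a) (hg : g ∈ W a) :
    (fun x => f x + g x) ∈ W a := by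
  have hdf : Differentiable ℝ (lift1 f) := hf.1.differentiable two_ne_zero
  have hdg : Differentiable ℝ (lift1 g) := hg.1.differentiable two_ne_zero
  refine ⟨?_, fun x => add_nonneg (hf.2.1 x) (hg.2.1 x), fun x => ?_⟩
  · rw [lift1_add]; exact hf.1.add hg.1
  · rw [lift1_add, deriv_fun_add (hdf x) (hdg x)]
    calc |deriv (lift1 f) x + deriv (lift1 g) x|
        ≤ |deriv (lift1 f) x| + |deriv (lift1 g) x| := abs_add_le _ _
      _ ≤ a * lift1 f x + a * lift1 g x := add_le_add (hf.2.2 x) (hg.2.2 x)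
      _ = a * (lift1 f x + lift1 g x) := by ring
      _ = a * lift1 (fun x => f x + g x) x := rfl

lemma W_smul {a c : ℝ} (hc : 0 ≤ c) {f : 𝕋 → ℝ} (hf : f ∈ W a) :
    (fun x => c * f x) ∈ W a := by
  have hdf : Differentiable ℝ (lift1 f) := hf.1.differentiable two_ne_zero
  refine ⟨?_, fun x => mul_nonneg hc (hf.2.1 x), fun x => ?_⟩
  · rw [lift1_smul]; exact contDiff_const.mul hf.1
  · rw [lift1_smul, deriv_const_mul _ (hdf x)]
    calc |c * deriv (lift1 f) x| = c * |deriv (lift1 f) x| := by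
          rw [abs_mul, abs_of_nonneg hc]
      _ ≤ c * (a * lift1 f x) := by
          exact mul_le_mul_of_nonneg_left (hf.2.2 x) hc
      _ = a * (c * lift1 f x) := by ring

lemma V_add_W {a : ℝ} {f g : 𝕋 → ℝ} (hf : f ∈ Vcone a) (hg : g ∈ W a) :
    (fun x => f x + g x) ∈ Vcone a := by
  have hdf : Differentiable ℝ (lift1 f) := hf.1.differentiable two_ne_zero
  have hdg : Differentiable ℝ (lift1 g) := hg.1.differentiable two_ne_zero
  refine ⟨?_, fun x => add_pos_of_pos_of_nonneg (hf.2.1 x) (hg.2.1 x), fun x => ?_⟩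
  · rw [lift1_add]; exact hf.1.add hg.1
  · rw [lift1_add, deriv_fun_add (hdf x) (hdg x)]
    calc |deriv (lift1 f) x + deriv (lift1 g) x|
        ≤ |deriv (lift1 f) x| + |deriv (lift1 g) x| := abs_add_le _ _
      _ < a * lift1 f x + a * lift1 g x := by
          exact add_lt_add_of_lt_of_le (hf.2.2 x) (hg.2.2 x)
      _ = a * (lift1 f x + lift1 g x) := by ring

lemma V_smul {a c : ℝ} (hc : 0 < c) {f : 𝕋 → ℝ} (hf : f ∈ Vcone a) :
    (fun x => c * f x) ∈ Vcone a := by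
  have hdf : Differentiable ℝ (lift1 f) := hf.1.differentiable two_ne_zero
  refine ⟨?_, fun x => mul_pos hc (hf.2.1 x), fun x => ?_⟩
  · rw [lift1_smul]; exact contDiff_const.mul hf.1
  · rw [lift1_smul, deriv_const_mul _ (hdf x)]
    calc |c * deriv (lift1 f) x| = c * |deriv (lift1 f) x| := by
          rw [abs_mul, abs_of_nonneg hc.le]
      _ < c * (a * lift1 f x) := by
          exact mul_lt_mul_of_pos_left (hf.2.2 x) hc
      _ = a * (c * lift1 f x) := by ring

lemma W_finsum {a : ℝ} {ι : Type*} (s : Finset ι) {f : ι → 𝕋 → ℝ}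
    (hf : ∀ i ∈ s, f i ∈ W a) : (fun x => ∑ i ∈ s, f i x) ∈ W a := by
  classical
  induction s using Finset.induction with
  | empty => simpa using W_zero
  | @insert j s' hj ih =>
      have h1 : (fun x : 𝕋 => ∑ i ∈ insert j s', f i x)
          = fun x => f j x + ∑ i ∈ s', f i x := by
        funext x; exact Finset.sum_insert hj
      rw [h1]
      exact W_add (hf j (Finset.mem_insert_self j s'))
        (ih fun i hi => hf i (Finset.mem_insert_of_mem hi))

lemma sum_mem_V {a : ℝ} {ι : Type*} [DecidableEq ι] {s : Finset ι} {f : ι → 𝕋 → ℝ}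
    (hf : ∀ i ∈ s, f i ∈ W a) {k : ι} (hk : k ∈ s) (hfk : f k ∈ Vcone a) :
    (fun x => ∑ i ∈ s, f i x) ∈ Vcone a := by
  have h1 : (fun x : 𝕋 => ∑ i ∈ s, f i x)
      = fun x => f k x + ∑ i ∈ s.erase k, f i x := by
    funext x; rw [← Finset.add_sum_erase _ _ hk]
  rw [h1]
  exact V_add_W hfk (W_finsum _ fun i hi => hf i (Finset.mem_of_mem_erase hi))

end ConeAux

namespace ConeAux

lemma periodic_lift1 (ψ : 𝕋 → ℝ) : Function.Periodic (lift1 ψ) 1 := by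
  intro x
  unfold lift1
  rw [AddCircle.coe_add_period]

lemma periodic_deriv {f : ℝ → ℝ} (hf : Function.Periodic f 1) :
    Function.Periodic (deriv f) 1 := by
  intro x
  have h1 : (fun y => f (y + 1)) = f := funext fun y => hf y
  calc deriv f (x + 1) = deriv (fun y => f (y + 1)) x := (deriv_comp_add_const f 1 x).symm
    _ = deriv f x := by rw [h1]

lemma periodic_min {F : ℝ → ℝ} (hc : Continuous F) (hp : Function.Periodic F 1) :
    ∃ x₀, ∀ x, F x₀ ≤ F x := by
  obtain ⟨x₀, hx₀, hmin⟩ := isCompact_Icc.exists_isMinOn (s := Icc (0:ℝ) 1)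
    ⟨0, by norm_num⟩ hc.continuousOn
  refine ⟨x₀, fun x => ?_⟩
  have h1 : F (Int.fract x) = F x := by
    have h := hp.sub_int_mul_eq (x := x) (n := ⌊x⌋)
    rw [mul_one] at h
    rw [Int.fract]
    exact h
  have h2 : Int.fract x ∈ Icc (0:ℝ) 1 := ⟨Int.fract_nonneg x, (Int.fract_lt_one x).le⟩
  calc F x₀ ≤ F (Int.fract x) := hmin h2
    _ = F x := h1

lemma a_pos {a : ℝ} {f : 𝕋 → ℝ} (hf : f ∈ Vcone a) : 0 < a := by
  have h := hf.2.2 0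
  have h2 : 0 < lift1 f 0 := hf.2.1 _
  nlinarith [abs_nonneg (deriv (lift1 f) 0)]

lemma S_nonempty {a : ℝ} {f g : 𝕋 → ℝ} (hf : f ∈ Vcone a) (hg : g ∈ Vcone a) :
    ∃ t : ℝ, 0 < t ∧ (fun x => t * f x - g x) ∈ Vcone a := by
  have ha : 0 < a := a_pos hf
  have hdf : Differentiable ℝ (lift1 f) := hf.1.differentiable two_ne_zero
  have hdg : Differentiable ℝ (lift1 g) := hg.1.differentiable two_ne_zero
  have hcf' : Continuous (deriv (lift1 f)) := hf.1.continuous_deriv one_le_two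
  have hcg' : Continuous (deriv (lift1 g)) := hg.1.continuous_deriv one_le_two
  have hGc : Continuous (fun x => a * lift1 f x - |deriv (lift1 f) x|) :=
    (continuous_const.mul hf.1.continuous).sub hcf'.abs
  have hHc : Continuous (fun x => -(a * lift1 g x + |deriv (lift1 g) x|)) :=
    ((continuous_const.mul hg.1.continuous).add hcg'.abs).neg
  have hGp : Function.Periodic (fun x => a * lift1 f x - |deriv (lift1 f) x|) 1 := by
    intro x
    show a * lift1 f (x+1) - |deriv (lift1 f) (x+1)| = _
    rw [periodic_lift1 f x, periodic_deriv (periodic_lift1 f) x]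
  have hHp : Function.Periodic (fun x => -(a * lift1 g x + |deriv (lift1 g) x|)) 1 := by
    intro x
    show -(a * lift1 g (x+1) + |deriv (lift1 g) (x+1)|) = _
    rw [periodic_lift1 g x, periodic_deriv (periodic_lift1 g) x]
  obtain ⟨x₀, hx₀⟩ := periodic_min hGc hGp
  obtain ⟨y₀, hy₀⟩ := periodic_min hHc hHp
  obtain ⟨m, hm⟩ : ∃ m, m = a * lift1 f x₀ - |deriv (lift1 f) x₀| := ⟨_, rfl⟩
  obtain ⟨M, hM⟩ : ∃ M, M = a * lift1 g y₀ + |deriv (lift1 g) y₀| := ⟨_, rfl⟩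
  have hGm : ∀ y, m ≤ a * lift1 f y - |deriv (lift1 f) y| := fun y => hm ▸ hx₀ y
  have hHM : ∀ y, a * lift1 g y + |deriv (lift1 g) y| ≤ M := fun y => by
    have := hy₀ y; rw [← hM] at this; linarith
  have hmpos : 0 < m := by
    have := hf.2.2 x₀; rw [hm]; linarith
  have hMnn : 0 ≤ M := by
    have h1 := hg.2.1 ((y₀ : ℝ) : 𝕋)
    have h2 : (0:ℝ) ≤ |deriv (lift1 g) y₀| := abs_nonneg _
    have h3 : (0:ℝ) < lift1 g y₀ := h1
    rw [hM]; nlinarith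
  obtain ⟨c, hcdef⟩ : ∃ c : ℝ, c = M / m + 1 := ⟨_, rfl⟩
  have hc : 0 < c := by rw [hcdef]; positivity
  have h3 : M < c * m := by
    rw [hcdef, add_mul, div_mul_cancel₀ _ hmpos.ne', one_mul]; linarith
  have key : ∀ y : ℝ, |c * deriv (lift1 f) y - deriv (lift1 g) y|
      < a * (c * lift1 f y - lift1 g y) := by
    intro y
    have h1 := hGm y
    have h2 := hHM y
    have h4 : |c * deriv (lift1 f) y - deriv (lift1 g) y|
        ≤ c * |deriv (lift1 f) y| + |deriv (lift1 g) y| := by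
      calc |c * deriv (lift1 f) y - deriv (lift1 g) y|
          ≤ |c * deriv (lift1 f) y| + |deriv (lift1 g) y| := abs_sub _ _
        _ = c * |deriv (lift1 f) y| + |deriv (lift1 g) y| := by
            rw [abs_mul, abs_of_nonneg hc.le]
    have h5 : c * |deriv (lift1 f) y| ≤ c * (a * lift1 f y - m) :=
      mul_le_mul_of_nonneg_left (by linarith) hc.le
    nlinarith
  refine ⟨c, hc, ?_, ?_, ?_⟩
  · show ContDiff ℝ 2 fun y => c * lift1 f y - lift1 g y
    exact (contDiff_const.mul hf.1).sub hg.1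
  · intro x
    obtain ⟨y, rfl⟩ := QuotientAddGroup.mk_surjective x
    have hk := key y
    have h0 : 0 ≤ |c * deriv (lift1 f) y - deriv (lift1 g) y| := abs_nonneg _
    show (0:ℝ) < c * lift1 f y - lift1 g y
    by_contra hcon
    push_neg at hcon
    nlinarith [mul_le_mul_of_nonneg_left hcon ha.le]
  · intro y
    show |deriv (fun y => c * lift1 f y - lift1 g y) y|
        < a * (c * lift1 f y - lift1 g y)
    rw [deriv_fun_sub ((hdf y).const_mul _) (hdg y), deriv_const_mul _ (hdf y)]
    exact key y

end ConeAux

namespace ConeAux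

def S (a : ℝ) (f g : 𝕋 → ℝ) : Set ℝ :=
  {t : ℝ | 0 < t ∧ (fun x => t * f x - g x) ∈ Vcone a}

lemma betaH_eq (a : ℝ) (f g : 𝕋 → ℝ) : betaH a f g = sInf (S a f g) := rfl

lemma bddBelow_S (a : ℝ) (f g : 𝕋 → ℝ) : BddBelow (S a f g) :=
  ⟨0, fun t ht => ht.1.le⟩

lemma lb_S {a : ℝ} {f g : 𝕋 → ℝ} (hf : f ∈ Vcone a) (hg : g ∈ Vcone a)
    {t : ℝ} (ht : t ∈ S a f g) : g 0 / f 0 < t := by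
  have h1 : 0 < t * f 0 - g 0 := ht.2.2.1 0
  have h2 : 0 < f 0 := hf.2.1 0
  rw [div_lt_iff₀ h2]
  linarith

lemma beta_pos {a : ℝ} {f g : 𝕋 → ℝ} (hf : f ∈ Vcone a) (hg : g ∈ Vcone a) :
    0 < betaH a f g := by
  obtain ⟨t, ht⟩ := S_nonempty hf hg
  have h2 : 0 < f 0 := hf.2.1 0
  have h3 : 0 < g 0 := hg.2.1 0
  calc (0:ℝ) < g 0 / f 0 := by positivity
    _ ≤ betaH a f g := le_csInf ⟨t, ht⟩ fun b hb => (lb_S hf hg hb).le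

lemma beta_le {a : ℝ} {f g : 𝕋 → ℝ} {t : ℝ} (ht : t ∈ S a f g) : betaH a f g ≤ t :=
  csInf_le (bddBelow_S a f g) ht

lemma mul_mem_S {a : ℝ} {f h g : 𝕋 → ℝ} {t₁ t₂ : ℝ}
    (h1 : t₁ ∈ S a f h) (h2 : t₂ ∈ S a h g) : t₁ * t₂ ∈ S a f g := by
  refine ⟨mul_pos h1.1 h2.1, ?_⟩
  have heq : (fun x => t₁ * t₂ * f x - g x)
      = fun x => t₂ * (t₁ * f x - h x) + (t₂ * h x - g x) := by
    funext x; ring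
  rw [heq]
  exact V_add_W (V_smul h2.1 h1.2) (V_subset_W h2.2)

lemma beta_tri {a : ℝ} {f h g : 𝕋 → ℝ} (hf : f ∈ Vcone a) (hh : h ∈ Vcone a)
    (hg : g ∈ Vcone a) : betaH a f g ≤ betaH a f h * betaH a h g := by
  obtain ⟨t₁0, ht₁0⟩ := S_nonempty hf hh
  obtain ⟨t₂0, ht₂0⟩ := S_nonempty hh hg
  have hb2 : 0 < betaH a h g := beta_pos hh hg
  have step1 : ∀ t₁ ∈ S a f h, betaH a f g / betaH a h g ≤ t₁ := by
    intro t₁ ht₁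
    have h2 : betaH a f g / t₁ ≤ betaH a h g := by
      refine le_csInf ⟨t₂0, ht₂0⟩ fun t₂ ht₂ => ?_
      rw [div_le_iff₀ ht₁.1]
      calc betaH a f g ≤ t₁ * t₂ := beta_le (mul_mem_S ht₁ ht₂)
        _ = t₂ * t₁ := mul_comm _ _
    rw [div_le_iff₀ hb2]
    rw [div_le_iff₀ ht₁.1] at h2
    linarith [h2]
  have h3 : betaH a f g / betaH a h g ≤ betaH a f h :=
    le_csInf ⟨t₁0, ht₁0⟩ step1
  rw [div_le_iff₀ hb2] at h3
  linarith

lemma S_self {a : ℝ} {f : 𝕋 → ℝ} (hf : f ∈ Vcone a) : S a f f = Ioi 1 := by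
  ext t
  constructor
  · intro ht
    have h1 : 0 < t * f 0 - f 0 := ht.2.2.1 0
    have h2 : 0 < f 0 := hf.2.1 0
    show (1:ℝ) < t
    by_contra hc
    push_neg at hc
    nlinarith [h1, h2]
  · intro ht
    have ht1 : (1:ℝ) < t := ht
    refine ⟨by linarith, ?_⟩
    have heq : (fun x => t * f x - f x) = fun x => (t - 1) * f x := by
      funext x; ring
    rw [heq]
    exact V_smul (by linarith) hf

lemma beta_self {a : ℝ} {f : 𝕋 → ℝ} (hf : f ∈ Vcone a) : betaH a f f = 1 := by
  rw [betaH_eq, S_self hf, csInf_Ioi]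

lemma theta_self {a : ℝ} {f : 𝕋 → ℝ} (hf : f ∈ Vcone a) : thetaH a f f = 0 := by
  unfold thetaH
  rw [beta_self hf, Real.log_one, add_zero]

lemma beta_smul_right {a l : ℝ} (hl : 0 < l) {u : 𝕋 → ℝ} (hu : u ∈ Vcone a) :
    betaH a u (fun x => l * u x) = l := by
  have hS : S a u (fun x => l * u x) = Ioi l := by
    ext t
    constructor
    · intro ht
      have h1 : 0 < t * u 0 - l * u 0 := ht.2.2.1 0
      have h2 : 0 < u 0 := hu.2.1 0
      show l < t
      nlinarith
    · intro ht
      have ht1 : l < t := ht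
      refine ⟨by linarith, ?_⟩
      have heq : (fun x => t * u x - l * u x) = fun x => (t - l) * u x := by
        funext x; ring
      rw [heq]
      exact V_smul (by linarith) hu
  rw [betaH_eq, hS, csInf_Ioi]

lemma beta_smul_left {a l : ℝ} (hl : 0 < l) {u : 𝕋 → ℝ} (hu : u ∈ Vcone a) :
    betaH a (fun x => l * u x) u = l⁻¹ := by
  have hS : S a (fun x => l * u x) u = Ioi l⁻¹ := by
    ext t
    constructor
    · intro ht
      have h1 : 0 < t * (l * u 0) - u 0 := ht.2.2.1 0
      have h2 : 0 < u 0 := hu.2.1 0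
      show l⁻¹ < t
      rw [inv_lt_iff_one_lt_mul₀ hl] ; nlinarith
    · intro ht
      have ht1 : l⁻¹ < t := ht
      have htpos : 0 < t := lt_trans (by positivity) ht1
      refine ⟨htpos, ?_⟩
      have heq : (fun x => t * (l * u x) - u x) = fun x => (t * l - 1) * u x := by
        funext x; ring
      rw [heq]
      have : 1 < t * l := by
        rw [inv_lt_iff_one_lt_mul₀ hl] at ht1; linarith
      exact V_smul (by linarith) hu
  rw [betaH_eq, hS, csInf_Ioi]

end ConeAux

namespace ConeAux

variable {n : ℕ}

lemma comb_mem_V {a : ℝ} {ρ : Fin n → 𝕋 → ℝ} (hρ : ∀ i, ρ i ∈ Vcone a)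
    {α : Fin n → ℝ} (hα : ∀ i, 0 ≤ α i) {k : Fin n} (hk : 0 < α k) :
    (fun x => ∑ i, α i * ρ i x) ∈ Vcone a :=
  sum_mem_V (f := fun i => fun x => α i * ρ i x)
    (fun i _ => W_smul (hα i) (V_subset_W (hρ i))) (Finset.mem_univ k)
    (V_smul hk (hρ k))

lemma log_concave_pair {x y t : ℝ} (hx : 0 < x) (hy : 0 < y) (ht0 : 0 ≤ t)
    (ht1 : t ≤ 1) :
    t * Real.log x + (1 - t) * Real.log y ≤ Real.log (t * x + (1 - t) * y) := by
  have h := (strictConcaveOn_log_Ioi.concaveOn).2 (Set.mem_Ioi.mpr hx)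
    (Set.mem_Ioi.mpr hy) ht0 (show (0:ℝ) ≤ 1 - t by linarith) (by ring)
  simpa [smul_eq_mul] using h

lemma le_of_forall_pos_le_add' {x y : ℝ} (h : ∀ ε : ℝ, 0 < ε → x ≤ y + ε) : x ≤ y :=
  le_of_forall_pos_le_add h

lemma theta_comb {a R : ℝ} {c : 𝕋 → ℝ} (hc : c ∈ Vcone a)
    {ρ : Fin n → 𝕋 → ℝ} (hρ : ∀ i, ρ i ∈ Vcone a)
    {α : Fin n → ℝ} (hα : ∀ i, 0 ≤ α i) {k : Fin n} (hk : 0 < α k)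
    (hR : ∀ i, thetaH a c (ρ i) ≤ R) :
    thetaH a c (fun x => ∑ i, α i * ρ i x) ≤ R := by
  have huV : (fun x => ∑ i, α i * ρ i x) ∈ Vcone a := comb_mem_V hρ hα hk
  set u : 𝕋 → ℝ := fun x => ∑ i, α i * ρ i x with hu
  have hb1 : 0 < betaH a c u := beta_pos hc huV
  have hb2 : 0 < betaH a u c := beta_pos huV hc
  have key : ∀ ε : ℝ, 0 < ε → betaH a c u * betaH a u c ≤ Real.exp (R + 2*ε) := by
    intro ε hε
    have hexp1 : (1:ℝ) < Real.exp ε := Real.one_lt_exp_iff.mpr hε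
    -- choose t i and s i
    have hT : ∀ i : Fin n, ∃ t ∈ S a c (ρ i), t < betaH a c (ρ i) * Real.exp ε := by
      intro i
      refine exists_lt_of_csInf_lt ⟨_, (S_nonempty hc (hρ i)).choose_spec⟩ ?_
      have hbp : 0 < betaH a c (ρ i) := beta_pos hc (hρ i)
      rw [betaH_eq] at *
      nlinarith
    have hS' : ∀ i : Fin n, ∃ t ∈ S a (ρ i) c, t < betaH a (ρ i) c * Real.exp ε := by
      intro i
      refine exists_lt_of_csInf_lt ⟨_, (S_nonempty (hρ i) hc).choose_spec⟩ ?_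
      have hbp : 0 < betaH a (ρ i) c := beta_pos (hρ i) hc
      rw [betaH_eq] at *
      nlinarith
    choose t htS htlt using hT
    choose v hvS hvlt using hS'
    have htpos : ∀ i, 0 < t i := fun i => (htS i).1
    have hvpos : ∀ i, 0 < v i := fun i => (hvS i).1
    -- product bound
    have hts : ∀ i, t i * v i ≤ Real.exp (R + 2*ε) := by
      intro i
      have hbp1 : 0 < betaH a c (ρ i) := beta_pos hc (hρ i)
      have hbp2 : 0 < betaH a (ρ i) c := beta_pos (hρ i) hc
      have h1 : t i * v i < betaH a c (ρ i) * betaH a (ρ i) c * Real.exp (2*ε) := by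
        have := mul_lt_mul'' (htlt i) (hvlt i) (htpos i).le (hvpos i).le
        calc t i * v i < betaH a c (ρ i) * Real.exp ε * (betaH a (ρ i) c * Real.exp ε) := this
          _ = betaH a c (ρ i) * betaH a (ρ i) c * Real.exp (2*ε) := by
              rw [two_mul, Real.exp_add]; ring
      have h2 : betaH a c (ρ i) * betaH a (ρ i) c = Real.exp (thetaH a c (ρ i)) := by
        rw [thetaH, Real.exp_add, Real.exp_log hbp1, Real.exp_log hbp2]
      have h3 : Real.exp (thetaH a c (ρ i)) ≤ Real.exp R := Real.exp_le_exp.mpr (hR i)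
      calc t i * v i ≤ betaH a c (ρ i) * betaH a (ρ i) c * Real.exp (2*ε) := h1.le
        _ ≤ Real.exp R * Real.exp (2*ε) := by
            refine mul_le_mul_of_nonneg_right ?_ (Real.exp_nonneg _)
            rw [h2]; exact h3
        _ = Real.exp (R + 2*ε) := (Real.exp_add _ _).symm
    -- membership A
    have hA : (∑ i, α i * t i) ∈ S a c u := by
      refine ⟨Finset.sum_pos' (fun i _ => mul_nonneg (hα i) (htpos i).le)
        ⟨k, Finset.mem_univ k, mul_pos hk (htpos k)⟩, ?_⟩
      have heq : (fun x => (∑ i, α i * t i) * c x - u x)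
          = fun x => ∑ i, α i * (t i * c x - ρ i x) := by
        funext x
        rw [hu, Finset.sum_mul, ← Finset.sum_sub_distrib]
        exact Finset.sum_congr rfl fun i _ => by ring
      rw [heq]
      exact sum_mem_V (f := fun i => fun x => α i * (t i * c x - ρ i x))
        (fun i _ => W_smul (hα i) (V_subset_W (htS i).2)) (Finset.mem_univ k)
        (V_smul hk (htS k).2)
    -- membership B
    have hQpos : 0 < ∑ i, α i / v i :=
      Finset.sum_pos' (fun i _ => div_nonneg (hα i) (hvpos i).le)
        ⟨k, Finset.mem_univ k, div_pos hk (hvpos k)⟩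
    have hB : (∑ i, α i / v i)⁻¹ ∈ S a u c := by
      refine ⟨by positivity, ?_⟩
      have hinner : (fun x => ∑ i, (α i / v i) * (v i * ρ i x - c x)) ∈ Vcone a :=
        sum_mem_V (f := fun i => fun x => (α i / v i) * (v i * ρ i x - c x))
          (fun i _ => W_smul (div_nonneg (hα i) (hvpos i).le) (V_subset_W (hvS i).2))
          (Finset.mem_univ k) (V_smul (div_pos hk (hvpos k)) (hvS k).2)
      have heq : (fun x => (∑ i, α i / v i)⁻¹ * u x - c x)
          = fun x => (∑ i, α i / v i)⁻¹ * ∑ i, (α i / v i) * (v i * ρ i x - c x) := by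
        funext x
        have hsum : ∑ i, (α i / v i) * (v i * ρ i x - c x)
            = u x - (∑ i, α i / v i) * c x := by
          rw [hu, Finset.sum_mul, ← Finset.sum_sub_distrib]
          refine Finset.sum_congr rfl fun i _ => ?_
          have hv := (hvpos i).ne'
          field_simp
        rw [hsum, mul_sub, ← mul_assoc, inv_mul_cancel₀ hQpos.ne', one_mul]
      rw [heq]
      exact V_smul (by positivity) hinner
    -- conclude
    have hle1 : betaH a c u ≤ ∑ i, α i * t i := beta_le hA
    have hle2 : betaH a u c ≤ (∑ i, α i / v i)⁻¹ := beta_le hB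
    have hsum_le : ∑ i, α i * t i ≤ Real.exp (R + 2*ε) * ∑ i, α i / v i := by
      rw [Finset.mul_sum]
      refine Finset.sum_le_sum fun i _ => ?_
      have h1 : α i * t i = (α i / v i) * (t i * v i) := by
        have hv := (hvpos i).ne'
        field_simp
      rw [h1]
      calc (α i / v i) * (t i * v i) ≤ (α i / v i) * Real.exp (R + 2*ε) :=
            mul_le_mul_of_nonneg_left (hts i) (div_nonneg (hα i) (hvpos i).le)
        _ = Real.exp (R + 2*ε) * (α i / v i) := mul_comm _ _
    calc betaH a c u * betaH a u c ≤ (∑ i, α i * t i) * (∑ i, α i / v i)⁻¹ := by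
          refine mul_le_mul hle1 hle2 hb2.le ?_
          exact le_trans hb1.le hle1
      _ ≤ Real.exp (R + 2*ε) := by
          rw [mul_inv_le_iff₀ hQpos]
          exact hsum_le
  -- from key to the statement
  show Real.log (betaH a c u) + Real.log (betaH a u c) ≤ R
  refine le_of_forall_pos_le_add' fun ε hε => ?_
  have h1 := key (ε/2) (by linarith)
  have h2 : Real.log (betaH a c u * betaH a u c) ≤ R + ε := by
    calc Real.log (betaH a c u * betaH a u c) ≤ Real.log (Real.exp (R + 2*(ε/2))) :=
          Real.log_le_log (by positivity) h1
      _ = R + ε := by rw [Real.log_exp]; ring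
  rw [Real.log_mul hb1.ne' hb2.ne'] at h2
  exact h2
end ConeAux

set_option maxHeartbeats 2000000 in
theorem simplex_aux (a : ℝ) (ha : 0 ≤ a) (n : ℕ) (hn : 0 < n)
    (ρ : Fin n → 𝕋 → ℝ) (hρ : ∀ i, ρ i ∈ Vcone a)
    (β β' : Fin n → ℝ) (hβ : ∀ i, 0 < β i) (hβ' : ∀ i, 0 < β' i) :
    thetaH a (fun x => ∑ i, β i * ρ i x) (fun x => ∑ i, β' i * ρ i x)
      ≤ (1 - Real.exp (-(2 * ⨅ j : Fin n, ⨆ i : Fin n, thetaH a (ρ j) (ρ i)))) *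
        Real.log (⨆ p : Fin n × Fin n, β p.1 / β' p.1 * (β' p.2 / β p.2)) := by
  classical
  open ConeAux in
  have hne : Nonempty (Fin n) := ⟨⟨0, hn⟩⟩
  -- the center j0
  obtain ⟨j0, hj0⟩ := exists_eq_ciInf_of_finite
    (f := fun j : Fin n => ⨆ i : Fin n, thetaH a (ρ j) (ρ i))
  set R : ℝ := ⨆ i : Fin n, thetaH a (ρ j0) (ρ i) with hRdef
  have hRi : ∀ i, thetaH a (ρ j0) (ρ i) ≤ R := fun i => by
    rw [hRdef]
    exact le_ciSup (f := fun i => thetaH a (ρ j0) (ρ i))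
      (Set.Finite.bddAbove (Set.finite_range _)) i
  have hR0 : 0 ≤ R := by
    have := hRi j0
    have h2 := theta_self (hρ j0)
    calc (0:ℝ) = thetaH a (ρ j0) (ρ j0) := h2.symm
      _ ≤ R := hRi j0
  clear_value R
  set s : ℝ := Real.exp (-(2*R)) with hsdef
  have hs0 : 0 < s := Real.exp_pos _
  have hs1 : s ≤ 1 := Real.exp_le_one_iff.mpr (by linarith)
  clear_value s
  -- rewrite the RHS exponent
  have hDrw : (1 - Real.exp (-(2 * ⨅ j : Fin n, ⨆ i : Fin n, thetaH a (ρ j) (ρ i))))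
      = 1 - s := by rw [hsdef, ← hj0]
  rw [hDrw]
  -- min and max ratios
  obtain ⟨i0, -, hi0⟩ := Finset.exists_min_image Finset.univ (fun i => β' i / β i)
    ⟨⟨0, hn⟩, Finset.mem_univ _⟩
  obtain ⟨i1, -, hi1⟩ := Finset.exists_max_image Finset.univ (fun i => β' i / β i)
    ⟨⟨0, hn⟩, Finset.mem_univ _⟩
  set l : ℝ := β' i0 / β i0 with hldef
  set L : ℝ := β' i1 / β i1 with hLdef
  have hlpos : 0 < l := div_pos (hβ' i0) (hβ i0)
  have hLpos : 0 < L := div_pos (hβ' i1) (hβ i1)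
  have hlL : l ≤ L := hi1 i0 (Finset.mem_univ _)
  have hlb : ∀ i, l * β i ≤ β' i := fun i => by
    have h := hi0 i (Finset.mem_univ _)
    rw [hldef] at h ⊢
    rw [div_le_div_iff₀ (hβ i0) (hβ i)] at h
    calc β' i0 / β i0 * β i = β' i0 * β i / β i0 := by ring
      _ ≤ β' i := by rw [div_le_iff₀ (hβ i0)]; linarith
  have hub : ∀ i, β' i ≤ L * β i := fun i => by
    have h := hi1 i (Finset.mem_univ _)
    rw [hLdef] at h ⊢
    rw [div_le_div_iff₀ (hβ i) (hβ i1)] at h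
    calc β' i ≤ β' i1 * β i / β i1 := by rw [le_div_iff₀ (hβ i1)]; linarith
      _ = β' i1 / β i1 * β i := by ring
  clear_value l L
  -- the sup M
  set M : ℝ := ⨆ p : Fin n × Fin n, β p.1 / β' p.1 * (β' p.2 / β p.2) with hMdef
  have hM1 : L / l ≤ M := by
    have h := le_ciSup (f := fun p : Fin n × Fin n => β p.1 / β' p.1 * (β' p.2 / β p.2))
      (Set.Finite.bddAbove (Set.finite_range _)) (i0, i1)
    have heq : β i0 / β' i0 * (β' i1 / β i1) = L / l := by
      rw [hLdef, hldef]
      field_simp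
    rw [← heq]
    exact h
  have hM0 : 1 ≤ M := by
    have h := le_ciSup (f := fun p : Fin n × Fin n => β p.1 / β' p.1 * (β' p.2 / β p.2))
      (Set.Finite.bddAbove (Set.finite_range _)) (i0, i0)
    have heq : β i0 / β' i0 * (β' i0 / β i0) = 1 := by
      field_simp [(hβ i0).ne', (hβ' i0).ne']
    rw [heq] at h
    exact h
  have hlogM : 0 ≤ Real.log M := Real.log_nonneg hM0
  clear_value M
  -- the combinations
  set u : 𝕋 → ℝ := fun x => ∑ i, β i * ρ i x with hudef
  set v : 𝕋 → ℝ := fun x => ∑ i, β' i * ρ i x with hvdef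
  have huV : u ∈ Vcone a := comb_mem_V hρ (fun i => (hβ i).le) (hβ ⟨0, hn⟩)
  have hvV : v ∈ Vcone a := comb_mem_V hρ (fun i => (hβ' i).le) (hβ' ⟨0, hn⟩)
  clear_value u v
  by_cases hprop : ∀ i, β' i = l * β i
  · -- proportional case
    have hveq : v = fun x => l * u x := by
      funext x
      rw [hvdef, hudef]
      simp only []
      rw [Finset.mul_sum]
      exact Finset.sum_congr rfl fun i _ => by rw [hprop i]; ring
    have h1 : thetaH a u v = 0 := by
      rw [hveq]
      unfold thetaH
      rw [beta_smul_right hlpos huV, beta_smul_left hlpos huV, Real.log_inv]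
      ring
    rw [h1]
    exact mul_nonneg (by linarith) hlogM
  · -- general case
    push_neg at hprop
    obtain ⟨i2, hi2⟩ := hprop
    have hi2' : l * β i2 < β' i2 := lt_of_le_of_ne (hlb i2) (fun h => hi2 (h.symm))
    have hlLs : l < L := by
      have h := hub i2
      have hb2 := hβ i2
      nlinarith
    set w : 𝕋 → ℝ := fun x => v x - l * u x with hwdef
    have hweq : w = fun x => ∑ i, (β' i - l * β i) * ρ i x := by
      funext x
      rw [hwdef, hvdef, hudef]
      simp only []
      rw [Finset.mul_sum, ← Finset.sum_sub_distrib]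
      exact Finset.sum_congr rfl fun i _ => by ring
    have hwV : w ∈ Vcone a := by
      rw [hweq]
      exact comb_mem_V hρ (fun i => by linarith [hlb i]) (k := i2) (by linarith)
    clear_value w
    -- theta bounds via center
    have hθu : thetaH a (ρ j0) u ≤ R := by
      rw [hudef]
      exact theta_comb (hρ j0) hρ (fun i => (hβ i).le) (hβ ⟨0, hn⟩) hRi
    have hθw : thetaH a (ρ j0) w ≤ R := by
      rw [hweq]
      exact theta_comb (hρ j0) hρ (fun i => by linarith [hlb i]) (k := i2)
        (by linarith) hRi
    -- B and B'
    set B : ℝ := betaH a u w with hBdef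
    set B' : ℝ := betaH a w u with hB'def
    have hBpos : 0 < B := beta_pos huV hwV
    have hB'pos : 0 < B' := beta_pos hwV huV
    clear_value B B'
    have hBB' : B * B' ≤ Real.exp (2*R) := by
      have h1 : B ≤ betaH a u (ρ j0) * betaH a (ρ j0) w := by
        rw [hBdef]; exact beta_tri huV (hρ j0) hwV
      have h2 : B' ≤ betaH a w (ρ j0) * betaH a (ρ j0) u := by
        rw [hB'def]; exact beta_tri hwV (hρ j0) huV
      have p1 : 0 < betaH a u (ρ j0) := beta_pos huV (hρ j0)
      have p2 : 0 < betaH a (ρ j0) w := beta_pos (hρ j0) hwV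
      have p3 : 0 < betaH a w (ρ j0) := beta_pos hwV (hρ j0)
      have p4 : 0 < betaH a (ρ j0) u := beta_pos (hρ j0) huV
      have e1 : betaH a (ρ j0) u * betaH a u (ρ j0) = Real.exp (thetaH a (ρ j0) u) := by
        rw [thetaH, Real.exp_add, Real.exp_log p4, Real.exp_log p1]
      have e2 : betaH a (ρ j0) w * betaH a w (ρ j0) = Real.exp (thetaH a (ρ j0) w) := by
        rw [thetaH, Real.exp_add, Real.exp_log p2, Real.exp_log p3]
      calc B * B' ≤ (betaH a u (ρ j0) * betaH a (ρ j0) w)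
            * (betaH a w (ρ j0) * betaH a (ρ j0) u) := by
            exact mul_le_mul h1 h2 hB'pos.le (by positivity)
        _ = (betaH a (ρ j0) u * betaH a u (ρ j0))
            * (betaH a (ρ j0) w * betaH a w (ρ j0)) := by ring
        _ = Real.exp (thetaH a (ρ j0) u) * Real.exp (thetaH a (ρ j0) w) := by
            rw [e1, e2]
        _ ≤ Real.exp R * Real.exp R := by
            exact mul_le_mul (Real.exp_le_exp.mpr hθu) (Real.exp_le_exp.mpr hθw)
              (Real.exp_nonneg _) (Real.exp_nonneg _)
        _ = Real.exp (2*R) := by rw [← Real.exp_add]; ring_nf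
    -- B ≤ L - l
    have hmemLl : (L - l) ∈ S a u w := by
      refine ⟨by linarith, ?_⟩
      have heq : (fun x => (L - l) * u x - w x)
          = fun x => ∑ i, (L * β i - β' i) * ρ i x := by
        funext x
        rw [hwdef, hvdef, hudef]
        simp only []
        rw [Finset.mul_sum, Finset.mul_sum, ← Finset.sum_sub_distrib,
          ← Finset.sum_sub_distrib]
        exact Finset.sum_congr rfl fun i _ => by ring
      rw [heq]
      have hi0eq : β' i0 = l * β i0 := by
        rw [hldef, div_mul_cancel₀ _ (hβ i0).ne']
      exact comb_mem_V hρ (fun i => by linarith [hub i]) (k := i0)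
        (by rw [hi0eq]; nlinarith [hβ i0])
    have hBle : B ≤ L - l := by rw [hBdef]; exact beta_le hmemLl
    -- beta u v ≤ l + B
    have hβuv : betaH a u v ≤ l + B := by
      have step : ∀ t ∈ S a u w, betaH a u v ≤ l + t := by
        intro t ht
        refine beta_le ⟨by linarith [ht.1], ?_⟩
        have heq : (fun x => (l + t) * u x - v x) = fun x => t * u x - w x := by
          funext x
          rw [hwdef]
          ring
        rw [heq]
        exact ht.2
      have h2 : betaH a u v - l ≤ B := by
        rw [hBdef]
        exact le_csInf ⟨L - l, hmemLl⟩ (fun t ht => by linarith [step t ht])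
      linarith
    -- beta v u ≤ B'/(1+l*B')
    have hβvu : betaH a v u ≤ B' / (1 + l * B') := by
      set q : ℝ := betaH a v u with hqdef
      have hqpos : 0 < q := beta_pos hvV huV
      clear_value q
      have step : ∀ t ∈ S a w u, q * (1 + l * t) ≤ t := by
        intro t ht
        have htpos : 0 < t := ht.1
        have hden : 0 < 1 + l * t := by nlinarith [mul_pos hlpos htpos]
        have hmem : t / (1 + l * t) ∈ S a v u := by
          refine ⟨div_pos htpos hden, ?_⟩
          have heq : (fun x => (t / (1 + l * t)) * v x - u x)
              = fun x => (1 / (1 + l * t)) * (t * w x - u x) := by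
            funext x
            rw [hwdef]
            simp only []
            field_simp
            ring
          rw [heq]
          exact V_smul (one_div_pos.mpr hden) ht.2
        have := beta_le hmem
        rw [← hqdef] at this
        rw [div_eq_mul_inv] at this
        calc q * (1 + l * t) ≤ (t * (1 + l * t)⁻¹) * (1 + l * t) := by
              exact mul_le_mul_of_nonneg_right this hden.le
          _ = t := by field_simp
      obtain ⟨t₀, ht₀⟩ := S_nonempty hwV huV
      have ht₀' : t₀ ∈ S a w u := ht₀
      have hfrac : 0 < 1 - l * q := by
        have h := step t₀ ht₀'
        have ht₀pos : 0 < t₀ := ht₀.1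
        by_contra hc
        push_neg at hc
        have h5 : t₀ * 1 ≤ t₀ * (l * q) :=
          mul_le_mul_of_nonneg_left (by linarith) ht₀pos.le
        have h6 : q * (1 + l * t₀) = q + t₀ * (l * q) := by ring
        linarith
      have h2 : q / (1 - l * q) ≤ B' := by
        rw [hB'def]
        refine le_csInf ⟨t₀, ht₀'⟩ fun t ht => ?_
        have h3 := step t ht
        rw [div_le_iff₀ hfrac]
        have h6 : q * (1 + l * t) = q + t * (l * q) := by ring
        linarith
      rw [div_le_iff₀ hfrac] at h2
      have hden' : 0 < 1 + l * B' := by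
        have := mul_pos hlpos hB'pos
        linarith
      rw [le_div_iff₀ hden']
      linarith [h2]
    -- final numeric chain
    have hβuvpos : 0 < betaH a u v := beta_pos huV hvV
    have hβvupos : 0 < betaH a v u := beta_pos hvV huV
    have hden : 0 < l + (L - l) * s := by
      have := mul_nonneg (by linarith : (0:ℝ) ≤ L - l) hs0.le
      linarith
    have hBB's : B * B' * s ≤ 1 := by
      have hx : Real.exp (2*R) * s = 1 := by
        rw [hsdef, ← Real.exp_add, show 2*R + -(2*R) = 0 by ring, Real.exp_zero]
      have h7 := mul_le_mul_of_nonneg_right hBB' hs0.le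
      linarith
    have key : betaH a u v * betaH a v u ≤ L / (l + (L - l) * s) := by
      have hden1 : 0 < 1 + l * B' := by
        have := mul_pos hlpos hB'pos
        linarith
      have hden2 : 0 < l + B * s := by
        have := mul_pos hBpos hs0
        linarith
      have stage1 : B' / (1 + l * B') ≤ 1 / (l + B * s) := by
        rw [div_le_div_iff₀ hden1 hden2]
        linarith [hBB's]
      have stage2 : (l + B) / (l + B * s) ≤ L / (l + (L - l) * s) := by
        rw [div_le_div_iff₀ hden2 hden]
        have h8 := mul_nonneg (mul_nonneg hlpos.le (by linarith : (0:ℝ) ≤ 1 - s))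
          (by linarith : (0:ℝ) ≤ L - l - B)
        linarith [h8]
      calc betaH a u v * betaH a v u ≤ (l + B) * (B' / (1 + l * B')) :=
            mul_le_mul hβuv hβvu hβvupos.le (by linarith)
        _ ≤ (l + B) * (1 / (l + B * s)) :=
            mul_le_mul_of_nonneg_left stage1 (by linarith)
        _ = (l + B) / (l + B * s) := by rw [mul_one_div]
        _ ≤ L / (l + (L - l) * s) := stage2
    have hfin1 : Real.log (betaH a u v) + Real.log (betaH a v u)
        ≤ Real.log (L / (l + (L - l) * s)) := by
      rw [← Real.log_mul hβuvpos.ne' hβvupos.ne']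
      exact Real.log_le_log (mul_pos hβuvpos hβvupos) key
    have hfin2 : Real.log (L / (l + (L - l) * s))
        = Real.log L - Real.log (l + (L - l) * s) :=
      Real.log_div hLpos.ne' hden.ne'
    have hconc : s * Real.log L + (1 - s) * Real.log l
        ≤ Real.log (l + (L - l) * s) := by
      have h := log_concave_pair hLpos hlpos hs0.le hs1
      have harg : s * L + (1 - s) * l = l + (L - l) * s := by ring
      rw [harg] at h
      exact h
    have hlogLl : Real.log L - Real.log l ≤ Real.log M := by
      rw [← Real.log_div hLpos.ne' hlpos.ne']
      exact Real.log_le_log (div_pos hLpos hlpos) hM1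
    have e5 : (1 - s) * (Real.log L - Real.log l) ≤ (1 - s) * Real.log M :=
      mul_le_mul_of_nonneg_left hlogLl (by linarith)
    show Real.log (betaH a u v) + Real.log (betaH a v u) ≤ (1 - s) * Real.log M
    linarith [hfin1, hfin2, hconc, e5]


/-- Distance between combinations with different coefficients. -/
theorem simplex_combination_distance (a : ℝ) (ha : 0 ≤ a) (n : ℕ) (hn : 0 < n)
    (ρ : Fin n → 𝕋 → ℝ) (hρ : ∀ i, ρ i ∈ Vcone a)
    (β β' : Fin n → ℝ) (hβ : ∀ i, 0 < β i) (hβ' : ∀ i, 0 < β' i) :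
    thetaH a (fun x => ∑ i, β i * ρ i x) (fun x => ∑ i, β' i * ρ i x)
      ≤ (1 - Real.exp (-(2 * ⨅ j : Fin n, ⨆ i : Fin n, thetaH a (ρ j) (ρ i)))) *
        Real.log (⨆ p : Fin n × Fin n, β p.1 / β' p.1 * (β' p.2 / β p.2)) :=
  simplex_aux a ha n hn ρ hρ β β' hβ hβ'
end

section
/- Let M ∈ ℕ, a_1,…,a_M ≥ 0, and for i = 1, 2 and j = 1,…,M let φ_{i,j} ∈ V_{a_j}. Set a := Σ_{j=1}^M a_j. Then for every b > a: θ_b(∏_{j=1}^M φ_{1,j}, ∏_{j=1}^M φ_{2,j}) ≤ Σ_{j=1}^M θ_{b_j}(φ_{1,j}, φ_{2,j}), where b_j := b − Σ_{k≠j} a_k. -/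
open MeasureTheory Filter Topology Set

/-! ### Auxiliary lemmas for `product_distance` -/

namespace PDaux

lemma rep_coe (x : 𝕋) : ((rep x : ℝ) : 𝕋) = x := (AddCircle.equivIco 1 0).symm_apply_apply x

lemma rep_mem (x : 𝕋) : rep x ∈ Set.Icc (0:ℝ) 1 := by
  have h := (AddCircle.equivIco 1 0 x).2
  have h1 : (0:ℝ) ≤ rep x := h.1
  have h2 : rep x < 0 + 1 := h.2
  exact ⟨h1, by linarith⟩

lemma Vcone_mono {a a' : ℝ} (h : a ≤ a') : Vcone a ⊆ Vcone a' := by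
  rintro ψ ⟨hc, hp, hd⟩
  refine ⟨hc, hp, fun x => (hd x).trans_le ?_⟩
  exact mul_le_mul_of_nonneg_right h (hp _).le

lemma Vcone_add {a : ℝ} {ψ χ : 𝕋 → ℝ} (hψ : ψ ∈ Vcone a) (hχ : χ ∈ Vcone a) :
    (fun x => ψ x + χ x) ∈ Vcone a := by
  obtain ⟨hc1, hp1, hd1⟩ := hψ
  obtain ⟨hc2, hp2, hd2⟩ := hχ
  have hL : lift1 (fun x => ψ x + χ x) = fun y => lift1 ψ y + lift1 χ y := rfl
  refine ⟨by rw [hL]; exact hc1.add hc2, fun x => add_pos (hp1 x) (hp2 x), fun x => ?_⟩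
  rw [hL]
  rw [deriv_fun_add ((hc1.differentiable two_ne_zero).differentiableAt)
    ((hc2.differentiable two_ne_zero).differentiableAt)]
  calc |deriv (lift1 ψ) x + deriv (lift1 χ) x|
      ≤ |deriv (lift1 ψ) x| + |deriv (lift1 χ) x| := abs_add_le _ _
    _ < a * lift1 ψ x + a * lift1 χ x := add_lt_add (hd1 x) (hd2 x)
    _ = a * (lift1 ψ x + lift1 χ x) := by ring

lemma Vcone_smul {a c : ℝ} {ψ : 𝕋 → ℝ} (hc : 0 < c) (hψ : ψ ∈ Vcone a) :
    (fun x => c * ψ x) ∈ Vcone a := by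
  obtain ⟨hc1, hp1, hd1⟩ := hψ
  have hL : lift1 (fun x => c * ψ x) = fun y => c * lift1 ψ y := rfl
  refine ⟨by rw [hL]; exact hc1.const_smul c, fun x => mul_pos hc (hp1 x), fun x => ?_⟩
  rw [hL, deriv_const_mul c ((hc1.differentiable two_ne_zero).differentiableAt), abs_mul,
    abs_of_pos hc]
  calc c * |deriv (lift1 ψ) x| < c * (a * lift1 ψ x) :=
        mul_lt_mul_of_pos_left (hd1 x) hc
    _ = a * (c * lift1 ψ x) := by ring

lemma Vcone_mul {a a' : ℝ} {ψ χ : 𝕋 → ℝ} (hψ : ψ ∈ Vcone a) (hχ : χ ∈ Vcone a') :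
    (fun x => ψ x * χ x) ∈ Vcone (a + a') := by
  obtain ⟨hc1, hp1, hd1⟩ := hψ
  obtain ⟨hc2, hp2, hd2⟩ := hχ
  have hL : lift1 (fun x => ψ x * χ x) = fun y => lift1 ψ y * lift1 χ y := rfl
  refine ⟨by rw [hL]; exact hc1.mul hc2, fun x => mul_pos (hp1 x) (hp2 x), fun x => ?_⟩
  rw [hL, deriv_fun_mul ((hc1.differentiable two_ne_zero).differentiableAt)
    ((hc2.differentiable two_ne_zero).differentiableAt)]
  have hB : 0 < lift1 χ x := hp2 _
  have hA : 0 < lift1 ψ x := hp1 _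
  calc |deriv (lift1 ψ) x * lift1 χ x + lift1 ψ x * deriv (lift1 χ) x|
      ≤ |deriv (lift1 ψ) x| * lift1 χ x + lift1 ψ x * |deriv (lift1 χ) x| := by
        refine (abs_add_le _ _).trans ?_
        rw [abs_mul, abs_mul, abs_of_pos hA, abs_of_pos hB]
    _ < a * lift1 ψ x * lift1 χ x + lift1 ψ x * (a' * lift1 χ x) :=
        add_lt_add (mul_lt_mul_of_pos_right (hd1 x) hB) (mul_lt_mul_of_pos_left (hd2 x) hA)
    _ = (a + a') * (lift1 ψ x * lift1 χ x) := by ring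

lemma Vcone_prod {n : ℕ} (a : Fin (n+1) → ℝ) (φ : Fin (n+1) → 𝕋 → ℝ)
    (h : ∀ j, φ j ∈ Vcone (a j)) :
    (fun x => ∏ j, φ j x) ∈ Vcone (∑ j, a j) := by
  induction n with
  | zero =>
    have e : (fun x => ∏ j, φ j x) = φ 0 := by
      funext x; simp [Fin.prod_univ_one]
    rw [e, Fin.sum_univ_one]; exact h 0
  | succ n ih =>
    have e : (fun x => ∏ j, φ j x) = fun x => φ 0 x * ∏ j : Fin (n+1), φ j.succ x := by
      funext x; rw [Fin.prod_univ_succ]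
    rw [e, Fin.sum_univ_succ]
    exact Vcone_mul (h 0) (ih (fun j => a j.succ) (fun j => φ j.succ) (fun j => h j.succ))

/-- The defining set of `betaH`. -/
def Scone (b : ℝ) (ψ₁ ψ₂ : 𝕋 → ℝ) : Set ℝ :=
  {t : ℝ | 0 < t ∧ (fun x => t * ψ₁ x - ψ₂ x) ∈ Vcone b}

lemma betaH_eq (b : ℝ) (ψ₁ ψ₂ : 𝕋 → ℝ) : betaH b ψ₁ ψ₂ = sInf (Scone b ψ₁ ψ₂) := rfl

lemma Scone_bddBelow (b : ℝ) (ψ₁ ψ₂ : 𝕋 → ℝ) : BddBelow (Scone b ψ₁ ψ₂) :=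
  ⟨0, fun _ ht => ht.1.le⟩

lemma Scone_upward {a b : ℝ} {ψ₁ ψ₂ : 𝕋 → ℝ} (hψ₁ : ψ₁ ∈ Vcone a) (hab : a ≤ b)
    {t u : ℝ} (ht : t ∈ Scone b ψ₁ ψ₂) (htu : t ≤ u) : u ∈ Scone b ψ₁ ψ₂ := by
  rcases eq_or_lt_of_le htu with rfl | h
  · exact ht
  · refine ⟨ht.1.trans h, ?_⟩
    have e : (fun x => u * ψ₁ x - ψ₂ x)
        = fun x => (t * ψ₁ x - ψ₂ x) + (u - t) * ψ₁ x := by funext x; ring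
    rw [e]
    exact Vcone_add ht.2 (Vcone_smul (sub_pos.2 h) (Vcone_mono hab hψ₁))

lemma Scone_nonempty {a b : ℝ} {ψ₁ ψ₂ : 𝕋 → ℝ} (hψ₁ : ψ₁ ∈ Vcone a) (hψ₂ : ψ₂ ∈ Vcone a)
    (ha : 0 ≤ a) (hab : a < b) : (Scone b ψ₁ ψ₂).Nonempty := by
  obtain ⟨hc1, hp1, hd1⟩ := hψ₁
  obtain ⟨hc2, hp2, hd2⟩ := hψ₂
  obtain ⟨xm, _, hxm⟩ := isCompact_Icc.exists_isMinOn (f := lift1 ψ₁)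
    ⟨0, Set.left_mem_Icc.2 zero_le_one⟩ (hc1.continuous.continuousOn)
  obtain ⟨xM, _, hxM⟩ := isCompact_Icc.exists_isMaxOn (f := lift1 ψ₂)
    ⟨0, Set.left_mem_Icc.2 zero_le_one⟩ (hc2.continuous.continuousOn)
  set m₁ := lift1 ψ₁ xm with hm₁
  set M₂ := lift1 ψ₂ xM with hM₂
  have hm₁pos : 0 < m₁ := hp1 _
  have hM₂pos : 0 < M₂ := hp2 _
  have hbpos : 0 < b := lt_of_le_of_lt ha hab
  set t : ℝ := ((b + a) * M₂) / ((b - a) * m₁) + 1 with htdef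
  have htnum : 0 ≤ (b + a) * M₂ := mul_nonneg (by linarith) hM₂pos.le
  have htden : 0 < (b - a) * m₁ := mul_pos (by linarith) hm₁pos
  have htpos : 0 < t := by positivity
  have key : ∀ x : 𝕋, a * (t * ψ₁ x + ψ₂ x) < b * (t * ψ₁ x - ψ₂ x) := by
    intro x
    have h1 : m₁ ≤ ψ₁ x := by
      have : lift1 ψ₁ (rep x) = ψ₁ x := by rw [lift1, rep_coe]
      rw [← this]; exact hxm (rep_mem x)
    have h2 : ψ₂ x ≤ M₂ := by
      have : lift1 ψ₂ (rep x) = ψ₂ x := by rw [lift1, rep_coe]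
      rw [← this]; exact hxM (rep_mem x)
    have hstep : (b + a) * ψ₂ x < t * ((b - a) * ψ₁ x) := by
      have e1 : (b + a) * ψ₂ x ≤ (b + a) * M₂ := mul_le_mul_of_nonneg_left h2 (by linarith)
      have e2 : ((b + a) * M₂ / ((b - a) * m₁)) * ((b - a) * m₁) = (b + a) * M₂ := by
        exact div_mul_cancel₀ _ htden.ne'
      have e3 : t * ((b - a) * m₁) = (b + a) * M₂ + (b - a) * m₁ := by
        rw [htdef, add_mul, one_mul, e2]
      have e4 : t * ((b - a) * m₁) ≤ t * ((b - a) * ψ₁ x) := by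
        refine mul_le_mul_of_nonneg_left ?_ htpos.le
        exact mul_le_mul_of_nonneg_left h1 (by linarith)
      linarith
    nlinarith [hstep]
  have hpos : ∀ x : 𝕋, 0 < t * ψ₁ x - ψ₂ x := by
    intro x
    have h0 : 0 ≤ a * (t * ψ₁ x + ψ₂ x) :=
      mul_nonneg ha (by nlinarith [hp1 x, hp2 x, htpos])
    nlinarith [key x]
  refine ⟨t, htpos, ?_, hpos, ?_⟩
  · show ContDiff ℝ 2 (fun y => t * lift1 ψ₁ y - lift1 ψ₂ y)
    exact (hc1.const_smul t).sub hc2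
  · intro x
    have hL : lift1 (fun x => t * ψ₁ x - ψ₂ x) = fun y => t * lift1 ψ₁ y - lift1 ψ₂ y := rfl
    rw [hL, deriv_fun_sub (((hc1.differentiable two_ne_zero).differentiableAt).const_mul t)
      ((hc2.differentiable two_ne_zero).differentiableAt),
      deriv_const_mul t ((hc1.differentiable two_ne_zero).differentiableAt)]
    have hb1 : |t * deriv (lift1 ψ₁) x - deriv (lift1 ψ₂) x|
        ≤ t * |deriv (lift1 ψ₁) x| + |deriv (lift1 ψ₂) x| := by
      refine (abs_sub _ _).trans ?_
      rw [abs_mul, abs_of_pos htpos]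
    have hb2 : t * |deriv (lift1 ψ₁) x| + |deriv (lift1 ψ₂) x|
        < a * (t * lift1 ψ₁ x + lift1 ψ₂ x) := by
      have := mul_lt_mul_of_pos_left (hd1 x) htpos
      have := hd2 x
      nlinarith
    have hk : a * (t * lift1 ψ₁ x + lift1 ψ₂ x) < b * (t * lift1 ψ₁ x - lift1 ψ₂ x) :=
      key ((x : ℝ) : 𝕋)
    calc |t * deriv (lift1 ψ₁) x - deriv (lift1 ψ₂) x|
        < a * (t * lift1 ψ₁ x + lift1 ψ₂ x) := lt_of_le_of_lt hb1 hb2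
      _ < b * (t * lift1 ψ₁ x - lift1 ψ₂ x) := hk
      _ = b * lift1 (fun x => t * ψ₁ x - ψ₂ x) x := rfl

lemma betaH_le {b : ℝ} {ψ₁ ψ₂ : 𝕋 → ℝ} {t : ℝ} (ht : t ∈ Scone b ψ₁ ψ₂) :
    betaH b ψ₁ ψ₂ ≤ t := csInf_le (Scone_bddBelow b ψ₁ ψ₂) ht

lemma Scone_of_lt {a b : ℝ} {ψ₁ ψ₂ : 𝕋 → ℝ} (hψ₁ : ψ₁ ∈ Vcone a) (hab : a ≤ b)
    (hne : (Scone b ψ₁ ψ₂).Nonempty) {u : ℝ} (hu : betaH b ψ₁ ψ₂ < u) :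
    u ∈ Scone b ψ₁ ψ₂ := by
  obtain ⟨t, ht, htu⟩ := exists_lt_of_csInf_lt hne hu
  exact Scone_upward hψ₁ hab ht htu.le

lemma betaH_pos {b : ℝ} {ψ₁ ψ₂ : 𝕋 → ℝ} (hne : (Scone b ψ₁ ψ₂).Nonempty)
    (h1 : 0 < ψ₁ 0) (h2 : 0 < ψ₂ 0) : 0 < betaH b ψ₁ ψ₂ := by
  have : ψ₂ 0 / ψ₁ 0 ≤ betaH b ψ₁ ψ₂ := by
    refine le_csInf hne fun t ht => ?_
    have hp : 0 < t * ψ₁ 0 - ψ₂ 0 := ht.2.2.1 0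
    have : ψ₂ 0 < t * ψ₁ 0 := by linarith
    exact (div_le_iff₀ h1).2 (by linarith)
  exact lt_of_lt_of_le (div_pos h2 h1) this

lemma Scone_prod {n : ℕ} (a : Fin (n+1) → ℝ) (ha : ∀ j, 0 ≤ a j)
    (φ₁ φ₂ : Fin (n+1) → 𝕋 → ℝ)
    (h₁ : ∀ j, φ₁ j ∈ Vcone (a j)) (h₂ : ∀ j, φ₂ j ∈ Vcone (a j))
    (b : ℝ) (hb : (∑ j, a j) < b) (t : Fin (n+1) → ℝ)
    (ht : ∀ j, t j ∈ Scone (b - (∑ k, a k) + a j) (φ₁ j) (φ₂ j)) :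
    (∏ j, t j) ∈ Scone b (fun x => ∏ j, φ₁ j x) (fun x => ∏ j, φ₂ j x) := by
  induction n generalizing b with
  | zero =>
    have e0 : b - (∑ k, a k) + a 0 = b := by rw [Fin.sum_univ_one]; ring
    have h0 := ht 0
    rw [e0] at h0
    refine ⟨by rw [Fin.prod_univ_one]; exact h0.1, ?_⟩
    have e : (fun x => (∏ j, t j) * (∏ j, φ₁ j x) - ∏ j, φ₂ j x)
        = fun x => t 0 * φ₁ 0 x - φ₂ 0 x := by
      funext x; rw [Fin.prod_univ_one, Fin.prod_univ_one, Fin.prod_univ_one]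
    rw [e]; exact h0.2
  | succ n ih =>
    have hpos : ∀ j, 0 < t j := fun j => (ht j).1
    have hs : (∑ k, a k) = a 0 + ∑ k : Fin (n+1), a k.succ := Fin.sum_univ_succ a
    have H := ih (fun j => a j.succ) (fun j => ha j.succ) (fun j => φ₁ j.succ)
      (fun j => φ₂ j.succ) (fun j => h₁ j.succ) (fun j => h₂ j.succ)
      (b - a 0) (by rw [hs] at hb; linarith) (fun j => t j.succ)
      (fun j => by
        have e : b - a 0 - (∑ k : Fin (n+1), a k.succ) + a j.succ
            = b - (∑ k, a k) + a j.succ := by rw [hs]; ring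
        rw [e]; exact ht j.succ)
    set T' : ℝ := ∏ j : Fin (n+1), t j.succ with hT'
    have hT'pos : 0 < T' := Finset.prod_pos fun j _ => hpos j.succ
    refine ⟨Finset.prod_pos fun j _ => hpos j, ?_⟩
    have e : (fun x => (∏ j, t j) * (∏ j, φ₁ j x) - ∏ j, φ₂ j x)
        = fun x => ((t 0 * φ₁ 0 x - φ₂ 0 x) * (T' * ∏ j : Fin (n+1), φ₁ j.succ x))
            + (φ₂ 0 x * (T' * (∏ j : Fin (n+1), φ₁ j.succ x)
              - ∏ j : Fin (n+1), φ₂ j.succ x)) := by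
      funext x
      rw [Fin.prod_univ_succ t, Fin.prod_univ_succ (fun j => φ₁ j x),
        Fin.prod_univ_succ (fun j => φ₂ j x)]
      ring
    rw [e]
    have hA : (fun x => (t 0 * φ₁ 0 x - φ₂ 0 x) * (T' * ∏ j : Fin (n+1), φ₁ j.succ x))
        ∈ Vcone b := by
      have m1 := (ht 0).2
      have m2 : (fun x => T' * ∏ j : Fin (n+1), φ₁ j.succ x)
          ∈ Vcone (∑ k : Fin (n+1), a k.succ) :=
        Vcone_smul hT'pos (Vcone_prod _ _ fun j => h₁ j.succ)
      have := Vcone_mul m1 m2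
      refine Vcone_mono (le_of_eq ?_) this
      rw [hs]; ring
    have hB : (fun x => φ₂ 0 x *
        (T' * (∏ j : Fin (n+1), φ₁ j.succ x) - ∏ j : Fin (n+1), φ₂ j.succ x))
          ∈ Vcone b := by
      have := Vcone_mul (h₂ 0) H.2
      refine Vcone_mono (le_of_eq ?_) this
      ring
    exact Vcone_add hA hB

lemma Scone_one {b : ℝ} (hb : 0 < b) :
    Scone b (fun _ : 𝕋 => (1:ℝ)) (fun _ => 1) = Set.Ioi 1 := by
  ext t
  constructor
  · rintro ⟨htpos, hc⟩
    have h : 0 < t * (1:ℝ) - 1 := hc.2.1 0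
    simp only [Set.mem_Ioi]
    nlinarith
  · intro ht
    simp only [Set.mem_Ioi] at ht
    refine ⟨by linarith, ?_, fun x => by norm_num; linarith, fun x => ?_⟩
    · exact contDiff_const
    · show |deriv (fun _ : ℝ => t * 1 - 1) x| < b * (t * 1 - 1)
      rw [deriv_const, abs_zero]
      nlinarith

lemma betaH_one {b : ℝ} (hb : 0 < b) :
    betaH b (fun _ : 𝕋 => (1:ℝ)) (fun _ => 1) = 1 := by
  show sInf (Scone b _ _) = 1
  rw [Scone_one hb, csInf_Ioi]

lemma le_of_le_mul_pow {x P : ℝ} (m : ℕ) (hP : 0 < P)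
    (h : ∀ δ : ℝ, 0 < δ → x ≤ P * (1+δ)^m) : x ≤ P := by
  have h0 : Filter.Tendsto (fun k : ℕ => 1/((k:ℝ)+1)) Filter.atTop (nhds 0) :=
    tendsto_one_div_add_atTop_nhds_zero_nat
  have ht : Filter.Tendsto (fun k : ℕ => P * (1 + 1/((k:ℝ)+1)) ^ m) Filter.atTop (nhds P) := by
    have h1 : Filter.Tendsto (fun k : ℕ => (1:ℝ) + 1/((k:ℝ)+1)) Filter.atTop (nhds (1 + 0)) :=
      Filter.Tendsto.add tendsto_const_nhds h0
    have h2 := (h1.pow m).const_mul P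
    simpa using h2
  exact ge_of_tendsto' ht fun k => h _ (by positivity)

end PDaux

/-- Hilbert distance between products of densities. -/
theorem product_distance (M : ℕ) (a : Fin M → ℝ) (ha : ∀ j, 0 ≤ a j)
    (φ₁ φ₂ : Fin M → 𝕋 → ℝ)
    (h₁ : ∀ j, φ₁ j ∈ Vcone (a j)) (h₂ : ∀ j, φ₂ j ∈ Vcone (a j))
    (b : ℝ) (hb : (∑ j, a j) < b) :
    thetaH b (fun x => ∏ j, φ₁ j x) (fun x => ∏ j, φ₂ j x)
      ≤ ∑ j, thetaH (b - ∑ k ∈ Finset.univ.erase j, a k) (φ₁ j) (φ₂ j) := by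
  cases M with
  | zero =>
    have hb0 : (0:ℝ) < b := by simpa using hb
    have e1 : (fun x : 𝕋 => ∏ j : Fin 0, φ₁ j x) = fun _ => (1:ℝ) := by
      funext x; simp
    have e2 : (fun x : 𝕋 => ∏ j : Fin 0, φ₂ j x) = fun _ => (1:ℝ) := by
      funext x; simp
    rw [e1, e2]
    simp only [Finset.univ_eq_empty, Finset.sum_empty]
    unfold thetaH
    rw [PDaux.betaH_one hb0, Real.log_one]
    norm_num
  | succ n =>
    have hrw : ∀ j : Fin (n+1), b - ∑ k ∈ Finset.univ.erase j, a k
        = b - (∑ k, a k) + a j := by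
      intro j
      rw [Finset.sum_erase_eq_sub (Finset.mem_univ j)]
      ring
    simp only [hrw]
    have haj : ∀ j : Fin (n+1), a j < b - (∑ k, a k) + a j := fun j => by linarith
    -- the main inequality on `betaH`, in both orientations
    have key : ∀ ψ₁ ψ₂ : Fin (n+1) → 𝕋 → ℝ, (∀ j, ψ₁ j ∈ Vcone (a j)) →
        (∀ j, ψ₂ j ∈ Vcone (a j)) →
        betaH b (fun x => ∏ j, ψ₁ j x) (fun x => ∏ j, ψ₂ j x)
          ≤ ∏ j, betaH (b - (∑ k, a k) + a j) (ψ₁ j) (ψ₂ j) := by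
      intro ψ₁ ψ₂ g₁ g₂
      have hne : ∀ j, (PDaux.Scone (b - (∑ k, a k) + a j) (ψ₁ j) (ψ₂ j)).Nonempty :=
        fun j => PDaux.Scone_nonempty (g₁ j) (g₂ j) (ha j) (haj j)
      have hβ : ∀ j, 0 < betaH (b - (∑ k, a k) + a j) (ψ₁ j) (ψ₂ j) :=
        fun j => PDaux.betaH_pos (hne j) ((g₁ j).2.1 0) ((g₂ j).2.1 0)
      have hP : 0 < ∏ j, betaH (b - (∑ k, a k) + a j) (ψ₁ j) (ψ₂ j) :=
        Finset.prod_pos fun j _ => hβ j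
      refine PDaux.le_of_le_mul_pow (n+1) hP fun δ hδ => ?_
      have hmem : ∀ j, betaH (b - (∑ k, a k) + a j) (ψ₁ j) (ψ₂ j) * (1+δ)
          ∈ PDaux.Scone (b - (∑ k, a k) + a j) (ψ₁ j) (ψ₂ j) := by
        intro j
        refine PDaux.Scone_of_lt (g₁ j) (haj j).le (hne j) ?_
        nlinarith [hβ j]
      have hprod := PDaux.Scone_prod a ha ψ₁ ψ₂ g₁ g₂ b hb
        (fun j => betaH (b - (∑ k, a k) + a j) (ψ₁ j) (ψ₂ j) * (1+δ)) hmem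
      calc betaH b (fun x => ∏ j, ψ₁ j x) (fun x => ∏ j, ψ₂ j x)
          ≤ ∏ j, (betaH (b - (∑ k, a k) + a j) (ψ₁ j) (ψ₂ j) * (1+δ)) :=
            PDaux.betaH_le hprod
        _ = (∏ j, betaH (b - (∑ k, a k) + a j) (ψ₁ j) (ψ₂ j)) * (1+δ)^(n+1) := by
            rw [Finset.prod_mul_distrib, Finset.prod_const, Finset.card_univ,
              Fintype.card_fin]
    have K1 := key φ₁ φ₂ h₁ h₂
    have K2 := key φ₂ φ₁ h₂ h₁
    -- positivity of the `betaH` of the products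
    have hne₁ : ∀ j, (PDaux.Scone (b - (∑ k, a k) + a j) (φ₁ j) (φ₂ j)).Nonempty :=
      fun j => PDaux.Scone_nonempty (h₁ j) (h₂ j) (ha j) (haj j)
    have hne₂ : ∀ j, (PDaux.Scone (b - (∑ k, a k) + a j) (φ₂ j) (φ₁ j)).Nonempty :=
      fun j => PDaux.Scone_nonempty (h₂ j) (h₁ j) (ha j) (haj j)
    have hβ₁ : ∀ j, 0 < betaH (b - (∑ k, a k) + a j) (φ₁ j) (φ₂ j) :=
      fun j => PDaux.betaH_pos (hne₁ j) ((h₁ j).2.1 0) ((h₂ j).2.1 0)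
    have hβ₂ : ∀ j, 0 < betaH (b - (∑ k, a k) + a j) (φ₂ j) (φ₁ j) :=
      fun j => PDaux.betaH_pos (hne₂ j) ((h₂ j).2.1 0) ((h₁ j).2.1 0)
    have hSne : ∀ ψ₁ ψ₂ : Fin (n+1) → 𝕋 → ℝ, (∀ j, ψ₁ j ∈ Vcone (a j)) →
        (∀ j, ψ₂ j ∈ Vcone (a j)) →
        (PDaux.Scone b (fun x => ∏ j, ψ₁ j x) (fun x => ∏ j, ψ₂ j x)).Nonempty := by
      intro ψ₁ ψ₂ g₁ g₂
      have hne : ∀ j, (PDaux.Scone (b - (∑ k, a k) + a j) (ψ₁ j) (ψ₂ j)).Nonempty :=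
        fun j => PDaux.Scone_nonempty (g₁ j) (g₂ j) (ha j) (haj j)
      have hβ : ∀ j, 0 < betaH (b - (∑ k, a k) + a j) (ψ₁ j) (ψ₂ j) :=
        fun j => PDaux.betaH_pos (hne j) ((g₁ j).2.1 0) ((g₂ j).2.1 0)
      have hmem : ∀ j, betaH (b - (∑ k, a k) + a j) (ψ₁ j) (ψ₂ j) * 2
          ∈ PDaux.Scone (b - (∑ k, a k) + a j) (ψ₁ j) (ψ₂ j) := by
        intro j
        refine PDaux.Scone_of_lt (g₁ j) (haj j).le (hne j) ?_
        nlinarith [hβ j]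
      exact ⟨_, PDaux.Scone_prod a ha ψ₁ ψ₂ g₁ g₂ b hb _ hmem⟩
    have hB1 : 0 < betaH b (fun x => ∏ j, φ₁ j x) (fun x => ∏ j, φ₂ j x) :=
      PDaux.betaH_pos (hSne φ₁ φ₂ h₁ h₂) (Finset.prod_pos fun j _ => (h₁ j).2.1 0)
        (Finset.prod_pos fun j _ => (h₂ j).2.1 0)
    have hB2 : 0 < betaH b (fun x => ∏ j, φ₂ j x) (fun x => ∏ j, φ₁ j x) :=
      PDaux.betaH_pos (hSne φ₂ φ₁ h₂ h₁) (Finset.prod_pos fun j _ => (h₂ j).2.1 0)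
        (Finset.prod_pos fun j _ => (h₁ j).2.1 0)
    have L1 : Real.log (betaH b (fun x => ∏ j, φ₁ j x) (fun x => ∏ j, φ₂ j x))
        ≤ ∑ j, Real.log (betaH (b - (∑ k, a k) + a j) (φ₁ j) (φ₂ j)) := by
      calc Real.log (betaH b (fun x => ∏ j, φ₁ j x) (fun x => ∏ j, φ₂ j x))
          ≤ Real.log (∏ j, betaH (b - (∑ k, a k) + a j) (φ₁ j) (φ₂ j)) :=
            Real.log_le_log hB1 K1
        _ = _ := Real.log_prod fun j _ => (hβ₁ j).ne'
    have L2 : Real.log (betaH b (fun x => ∏ j, φ₂ j x) (fun x => ∏ j, φ₁ j x))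
        ≤ ∑ j, Real.log (betaH (b - (∑ k, a k) + a j) (φ₂ j) (φ₁ j)) := by
      calc Real.log (betaH b (fun x => ∏ j, φ₂ j x) (fun x => ∏ j, φ₁ j x))
          ≤ Real.log (∏ j, betaH (b - (∑ k, a k) + a j) (φ₂ j) (φ₁ j)) :=
            Real.log_le_log hB2 K2
        _ = _ := Real.log_prod fun j _ => (hβ₂ j).ne'
    unfold thetaH
    rw [Finset.sum_add_distrib]
    exact add_le_add L1 L2
end
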